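/- arXiv:1205.4584 — 3 statements merged into one kernel-verified Lean document; each statement's English description precedes it below -/
import Mathlib

section
/- Fix a finite subset Λ of the locally finite connected graph G=(V,E) and a vertex x∈Λ. For every θ≥1, every q∈(θ/(θ+1),1] (with p=1−q), every initial configuration η∈Ω_Λ and every t≥0, the finite-volume FA1f semigroup satisfies ( exp(tL_Λ) g )(η) ≤ θ^{ξ^x(η)}·e^{−λt} + q/(q(θ+1)−θ), where g:Ω_Λ→ℝ is the function g(σ)=θ^{ξ^x(σ)} and λ=((θ²−1)/θ)·(q−θ/(θ+1)). -/
open scoped Classical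

noncomputable section

namespace FA1f

variable {V : Type*} [DecidableEq V]

/-- Configurations on a finite set `Λ` of vertices: `Ω_Λ = {0,1}^Λ`
(`false` = empty site, `true` = filled site). -/
abbrev Conf (Λ : Finset V) : Type _ := {x : V // x ∈ Λ} → Bool

/-- Bernoulli weight of a single spin: `p` for a filled site, `q` for an empty one. -/
def bw (p q : ℝ) (b : Bool) : ℝ := if b then p else q

/-- Weight of a configuration under the product Bernoulli(`p`) measure `μ_Λ`. -/
def wt (p q : ℝ) (Λ : Finset V) (σ : Conf Λ) : ℝ := ∏ x, bw p q (σ x)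

/-- Expectation `μ_Λ(f)` under the product Bernoulli(`p`) measure. -/
def mean (p q : ℝ) (Λ : Finset V) (f : Conf Λ → ℝ) : ℝ := ∑ σ, wt p q Λ σ * f σ

/-- Variance `Var_{μ_Λ}(f)`. -/
def variance (p q : ℝ) (Λ : Finset V) (f : Conf Λ → ℝ) : ℝ :=
  mean p q Λ (fun σ => f σ ^ 2) - (mean p q Λ f) ^ 2

/-- The single-site conditional variance `Var_x(f)(σ)`. -/
def varAt (p q : ℝ) (Λ : Finset V) (x : {x : V // x ∈ Λ}) (f : Conf Λ → ℝ) (σ : Conf Λ) : ℝ :=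
  (p * f (Function.update σ x true) ^ 2 + q * f (Function.update σ x false) ^ 2) -
    (p * f (Function.update σ x true) + q * f (Function.update σ x false)) ^ 2

/-- `σ^x` : the configuration `σ` flipped at `x`. -/
def flipAt (Λ : Finset V) (σ : Conf Λ) (x : {x : V // x ∈ Λ}) : Conf Λ :=
  Function.update σ x (! σ x)

/-- FA1f constraint `c^η_{x,Λ}(σ)` with boundary condition `η : V → Bool` (as a `0/1` number):
some neighbour of `x` is empty in the configuration equal to `σ` on `Λ` and `η` outside. -/
def constr (G : SimpleGraph V) (Λ : Finset V) (η : V → Bool) (x : {x : V // x ∈ Λ})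
    (σ : Conf Λ) : ℝ :=
  if ∃ y, G.Adj ↑x y ∧ (if h : y ∈ Λ then σ ⟨y, h⟩ = false else η y = false) then 1 else 0

/-- Flip rate `q·σ(x) + p·(1−σ(x))`. -/
def rate (p q : ℝ) (Λ : Finset V) (σ : Conf Λ) (x : {x : V // x ∈ Λ}) : ℝ :=
  if σ x then q else p

/-- The FA1f generator `L_Λ` in volume `Λ` with boundary condition `η`, as an operator. -/
def gen (G : SimpleGraph V) (Λ : Finset V) (p q : ℝ) (η : V → Bool) (f : Conf Λ → ℝ)
    (σ : Conf Λ) : ℝ :=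
  ∑ x, constr G Λ η x σ * rate p q Λ σ x * (f (flipAt Λ σ x) - f σ)

/-- The FA1f generator `L_Λ` in volume `Λ` with boundary condition `η`, as a matrix. -/
def genMat (G : SimpleGraph V) (Λ : Finset V) (p q : ℝ) (η : V → Bool) :
    Matrix (Conf Λ) (Conf Λ) ℝ := fun σ τ =>
  (∑ x, constr G Λ η x σ * rate p q Λ σ x * (if τ = flipAt Λ σ x then 1 else 0)) -
    (if τ = σ then ∑ x, constr G Λ η x σ * rate p q Λ σ x else 0)

/-- The FA1f Markov semigroup `exp(t L_Λ)` applied to `f`. -/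
def semigroup (G : SimpleGraph V) (Λ : Finset V) (p q : ℝ) (η : V → Bool) (t : ℝ)
    (f : Conf Λ → ℝ) : Conf Λ → ℝ :=
  (NormedSpace.exp (t • genMat G Λ p q η)).mulVec f

/-- Empty boundary condition. -/
def emptyBC : V → Bool := fun _ => false

/-- Completely filled boundary condition `ω`. -/
def fullBC : V → Bool := fun _ => true

/-- The boundary condition `ω^{(z)}`: filled everywhere except at `z`. -/
def minBC (z : V) : V → Bool := fun v => if v = z then false else true

/-- `σ` has at least one empty site in `Λ`. -/
def hasZero (Λ : Finset V) (σ : Conf Λ) : Prop := ∃ x, σ x = false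

/-- The conditional expectation `μ̂_Λ(f) = μ_Λ(f | Ω̂_Λ)` on the ergodic component
`Ω̂_Λ = {σ : at least one empty site}`. -/
def hatMean (p q : ℝ) (Λ : Finset V) (f : Conf Λ → ℝ) : ℝ :=
  mean p q Λ (fun σ => if hasZero Λ σ then f σ else 0) /
    mean p q Λ (fun σ => if hasZero Λ σ then 1 else 0)

/-- The variance `Var_{μ̂_Λ}(f)` with respect to the conditional measure `μ̂_Λ`. -/
def hatVar (p q : ℝ) (Λ : Finset V) (f : Conf Λ → ℝ) : ℝ :=
  hatMean p q Λ (fun σ => f σ ^ 2) - (hatMean p q Λ f) ^ 2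

/-- The entropy `Ent_{μ̂_Λ}(g)` of a (nonnegative) function `g` w.r.t. `μ̂_Λ`. -/
def hatEnt (p q : ℝ) (Λ : Finset V) (g : Conf Λ → ℝ) : ℝ :=
  hatMean p q Λ (fun σ => g σ * Real.log (g σ)) -
    hatMean p q Λ g * Real.log (hatMean p q Λ g)

/-- The constraint `ĉ_x(σ) = c^ω_{x,Λ}(σ)·1_{σ^x ∈ Ω̂_Λ}` of the FA1f chain restricted to the
ergodic component, with filled boundary condition. -/
def chat (G : SimpleGraph V) (Λ : Finset V) (x : {x : V // x ∈ Λ}) (σ : Conf Λ) : ℝ :=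
  constr G Λ fullBC x σ * (if hasZero Λ (flipAt Λ σ x) then 1 else 0)

/-- `(k,D)`-polynomial growth: every ball of radius `r ≥ 1` has at most `k·r^D` vertices. -/
def PolyGrowth (G : SimpleGraph V) (k D : ℝ) : Prop :=
  ∀ r : ℕ, 1 ≤ r → ∀ x : V, (({y : V | G.dist x y ≤ r}).ncard : ℝ) ≤ k * (r : ℝ) ^ D

/-- A finite set of vertices is connected if the induced subgraph is connected. -/
def FinConnected (G : SimpleGraph V) (A : Finset V) : Prop :=
  (G.induce (A : Set V)).Connected

/-- The outer boundary `∂A`. -/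
def outerBoundary (G : SimpleGraph V) (A : Finset V) : Set V :=
  {z | z ∉ A ∧ ∃ y ∈ A, G.Adj z y}

/-- `ξ^x(σ)`: distance from `x` to the nearest empty site, the configuration `σ` on `Λ`
being extended by zeros outside `Λ`. -/
def xi (G : SimpleGraph V) (Λ : Finset V) (x : V) (σ : Conf Λ) : ℕ :=
  sInf {n | ∃ y : V, (∀ h : y ∈ Λ, σ ⟨y, h⟩ = false) ∧ G.dist x y = n}

/-- The average of `f` over the coordinates lying in `S`, the coordinates outside `S`
being fixed to their values in `σ` (the conditional expectation `μ_S(f)`). -/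
def avgOver (p q : ℝ) (Λ S : Finset V) (f : Conf Λ → ℝ) (σ : Conf Λ) : ℝ :=
  ∑ τ : {x : V // x ∈ S} → Bool, (∏ y, bw p q (τ y)) *
    f (fun x => if h : ↑x ∈ S then τ ⟨↑x, h⟩ else σ x)

/-- The variance of `f` over the coordinates lying in `S` (the conditional variance
`Var_{μ_S}(f)`), as a function of the remaining coordinates. -/
def varOver (p q : ℝ) (Λ S : Finset V) (f : Conf Λ → ℝ) (σ : Conf Λ) : ℝ :=
  avgOver p q Λ S (fun ρ => f ρ ^ 2) σ - (avgOver p q Λ S f σ) ^ 2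

end FA1f

/-!
Write `g = θ ^ ξ` and `C = q / (q (θ + 1) - θ)`. The proof rests on the drift inequality
`L g ≤ -λ (g - C)`. If `x` is empty, only filling `x` can raise `ξ`, to at most `1`, at rate
`p`. If `ξ = k + 1`, emptying the neighbour of a closest empty site on a geodesic to `x` lowers
`ξ` to `k` at rate `q`, filling that empty site raises it to at most `k + 2` at rate `p`, and no
other flip raises `ξ`; these weights make the drift exactly `-λ θ^(k+1)`. The semigroup
`exp (t L)` is entrywise nonnegative and fixes constants, so the drift inequality integrates, as
for the ODE `φ' = -λ (φ - C)`, to `exp (t L) g ≤ e^{-λt} (g - C) + C`.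
-/

namespace Matrix

open NormedSpace

variable {n : Type*} [Fintype n] [DecidableEq n]

theorem exp_apply_nonneg {M : Matrix n n ℝ} (hM : ∀ i j, 0 ≤ M i j) (i j : n) :
    0 ≤ exp M i j := by
  let _ : NormedRing (Matrix n n ℝ) := Matrix.linftyOpNormedRing
  let _ : NormedAlgebra ℝ (Matrix n n ℝ) := Matrix.linftyOpNormedAlgebra
  have hentry := (LinearMap.toContinuousLinearMap (entryLinearMap ℝ ℝ i j)).map_tsum
    (expSeries_summable' (𝕂 := ℝ) M)
  simp only [LinearMap.coe_toContinuousLinearMap', entryLinearMap_apply] at hentry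
  rw [congrFun (exp_eq_tsum ℝ) M, hentry]
  refine tsum_nonneg fun k => ?_
  have hcoeff : (0 : ℝ) ≤ (k.factorial : ℝ)⁻¹ := by positivity
  simpa using mul_nonneg hcoeff (pow_apply_nonneg hM k i j)

/-- `exp M = e^{-c} exp (M + c)`, and `M + c` is entrywise nonnegative for `c` large. -/
theorem exp_apply_nonneg_of_offDiag_nonneg {M : Matrix n n ℝ}
    (hM : ∀ i j, i ≠ j → 0 ≤ M i j) (i j : n) : 0 ≤ exp M i j := by
  set c := ∑ k, |M k k|
  have hshift : ∀ k l, 0 ≤ (M + c • 1) k l := by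
    intro k l
    by_cases hkl : k = l
    · subst hkl
      have : |M k k| ≤ c := Finset.single_le_sum (f := fun k => |M k k|)
        (fun _ _ => abs_nonneg _) (Finset.mem_univ k)
      simp only [add_apply, smul_apply, one_apply_eq, smul_eq_mul, mul_one]
      linarith [neg_abs_le (M k k)]
    · simpa [hkl] using hM k l hkl
  have hcomm : Commute (M + c • 1) ((-c) • (1 : Matrix n n ℝ)) :=
    (Commute.one_right _).smul_right _
  rw [show M = (M + c • 1) + (-c) • 1 by module, exp_add_of_commute _ _ hcomm,
    smul_one_eq_diagonal (-c), exp_diagonal, mul_diagonal]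
  have hexp : 0 ≤ exp (-c) := Real.exp_eq_exp_ℝ ▸ (Real.exp_pos _).le
  exact mul_nonneg (exp_apply_nonneg hshift i j) (by simpa using hexp)

theorem hasDerivAt_exp_smul_mulVec_apply (M : Matrix n n ℝ) (g : n → ℝ) (i : n) (s : ℝ) :
    HasDerivAt (fun u : ℝ => (exp (u • M) *ᵥ g) i) ((exp (s • M) *ᵥ (M *ᵥ g)) i) s := by
  let _ : NormedRing (Matrix n n ℝ) := Matrix.linftyOpNormedRing
  let _ : NormedAlgebra ℝ (Matrix n n ℝ) := Matrix.linftyOpNormedAlgebra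
  let Φ : Matrix n n ℝ →ₗ[ℝ] ℝ :=
    { toFun := fun A => (A *ᵥ g) i
      map_add' := fun A B => by simp [add_mulVec]
      map_smul' := fun r A => by simp [smul_mulVec] }
  rw [mulVec_mulVec]
  exact (LinearMap.toContinuousLinearMap Φ).hasFDerivAt.comp_hasDerivAt s
    (hasDerivAt_exp_smul_const M s)

theorem exp_smul_mulVec_eq_self {M : Matrix n n ℝ} {v : n → ℝ} (hv : M *ᵥ v = 0) (t : ℝ) :
    exp (t • M) *ᵥ v = v := by
  funext i
  have hderiv (s : ℝ) := hasDerivAt_exp_smul_mulVec_apply M v i s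
  simp only [hv, mulVec_zero, Pi.zero_apply] at hderiv
  have := is_const_of_deriv_eq_zero (fun s => (hderiv s).differentiableAt)
    (fun s => (hderiv s).deriv) t 0
  simpa using this

/-- Comparison with the ODE `φ' = -λ (φ - C)`: `u ↦ e^{λu} ((exp (uM) g)_i - C)` is antitone
on `u ≥ 0`, because its derivative is `e^{λu} (exp (uM) (M g + λ (g - C)))_i` and `exp (uM)` is
entrywise nonnegative and fixes constants. -/
theorem exp_smul_mulVec_apply_le_of_drift {M : Matrix n n ℝ}
    (hM : ∀ i j, i ≠ j → 0 ≤ M i j) (hM1 : M *ᵥ (fun _ => 1) = 0) {g : n → ℝ}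
    {lam C : ℝ}
    (hdrift : ∀ i, (M *ᵥ g) i ≤ -lam * (g i - C)) {t : ℝ} (ht : 0 ≤ t) (i : n) :
    (exp (t • M) *ᵥ g) i ≤ Real.exp (-lam * t) * (g i - C) + C := by
  set φ : ℝ → ℝ := fun u => (exp (u • M) *ᵥ g) i
  have hφ' (u : ℝ) (hu : 0 ≤ u) : (exp (u • M) *ᵥ (M *ᵥ g)) i ≤ -lam * (φ u - C) := by
    have hpos : ∀ j k, 0 ≤ exp (u • M) j k := exp_apply_nonneg_of_offDiag_nonneg
      fun j k hjk => by simpa using mul_nonneg hu (hM j k hjk)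
    have hsplit : (fun j => -lam * (g j - C)) = (-lam) • g + (lam * C) • fun _ => 1 := by
      funext j; simp only [Pi.add_apply, Pi.smul_apply, smul_eq_mul]; ring
    calc (exp (u • M) *ᵥ (M *ᵥ g)) i ≤ (exp (u • M) *ᵥ fun j => -lam * (g j - C)) i :=
          Finset.sum_le_sum fun j _ => mul_le_mul_of_nonneg_left (hdrift j) (hpos i j)
      _ = -lam * (φ u - C) := by
          rw [hsplit, mulVec_add, mulVec_smul, mulVec_smul, exp_smul_mulVec_eq_self hM1]
          simp only [Pi.add_apply, Pi.smul_apply, smul_eq_mul, φ]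
          ring
  set ψ : ℝ → ℝ := fun u => Real.exp (lam * u) * (φ u - C)
  have hψ (u : ℝ) : HasDerivAt ψ (Real.exp (lam * u) * lam * (φ u - C) +
      Real.exp (lam * u) * (exp (u • M) *ᵥ (M *ᵥ g)) i) u := by
    have hexp : HasDerivAt (fun w => Real.exp (lam * w)) (Real.exp (lam * u) * lam) u := by
      simpa using ((hasDerivAt_id u).const_mul lam).exp
    exact hexp.mul ((hasDerivAt_exp_smul_mulVec_apply M g i u).sub_const C)
  have hanti : AntitoneOn ψ (Set.Icc 0 t) := by
    refine antitoneOn_of_hasDerivWithinAt_nonpos (convex_Icc 0 t)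
      (fun u _ => (hψ u).continuousAt.continuousWithinAt) (fun u _ => (hψ u).hasDerivWithinAt)
      fun u hu => ?_
    rw [interior_Icc] at hu
    have := mul_le_mul_of_nonneg_left (hφ' u hu.1.le) (Real.exp_pos (lam * u)).le
    linarith
  have hψt : Real.exp (lam * t) * (φ t - C) ≤ g i - C := by
    simpa [ψ, φ] using hanti (Set.left_mem_Icc.2 ht) (Set.right_mem_Icc.2 ht) ht
  have hexp : Real.exp (-lam * t) * Real.exp (lam * t) = 1 := by
    rw [← Real.exp_add]; simp
  have := mul_le_mul_of_nonneg_left hψt (Real.exp_pos (-lam * t)).le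
  rw [← mul_assoc, hexp, one_mul] at this
  linarith

end Matrix

theorem SimpleGraph.Connected.exists_adj_dist_eq {V : Type*} {G : SimpleGraph V}
    (hconn : G.Connected) {x y : V} {k : ℕ} (hd : G.dist x y = k + 1) :
    ∃ z, G.Adj z y ∧ G.dist x z = k := by
  obtain ⟨p, hp⟩ := hconn.exists_walk_length_eq_dist y x
  rw [SimpleGraph.dist_comm, hd] at hp
  cases p with
  | nil => simp at hp
  | @cons _ z _ hadj p =>
    have hle : G.dist x z ≤ k := by
      rw [SimpleGraph.Walk.length_cons, add_left_inj] at hp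
      exact hp ▸ SimpleGraph.dist_comm (G := G) ▸ SimpleGraph.dist_le p
    have htri : G.dist x y ≤ G.dist x z + G.dist z y := hconn.dist_triangle
    rw [hd, SimpleGraph.dist_eq_one_iff_adj.2 hadj.symm] at htri
    exact ⟨z, hadj.symm, by omega⟩

namespace FA1f

open scoped Matrix

variable {V : Type*} {G : SimpleGraph V} {Λ : Finset V} {x : V} {σ : Conf Λ}

def Vacant (Λ : Finset V) (σ : Conf Λ) (y : V) : Prop := ∀ h : y ∈ Λ, σ ⟨y, h⟩ = false

theorem exists_vacant_dist_eq_xi [Infinite V] (G : SimpleGraph V) (Λ : Finset V) (x : V)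
    (σ : Conf Λ) : ∃ y, Vacant Λ σ y ∧ G.dist x y = xi G Λ x σ := by
  obtain ⟨y, hy⟩ := Infinite.exists_notMem_finset Λ
  have hne : {n | ∃ y, Vacant Λ σ y ∧ G.dist x y = n}.Nonempty :=
    ⟨G.dist x y, y, fun h => absurd h hy, rfl⟩
  exact Nat.sInf_mem hne

theorem xi_le_dist {y : V} (hy : Vacant Λ σ y) : xi G Λ x σ ≤ G.dist x y :=
  Nat.sInf_le ⟨y, hy, rfl⟩

theorem exists_mem_eq_true_of_dist_lt_xi {y : V} (hy : G.dist x y < xi G Λ x σ) :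
    ∃ h : y ∈ Λ, σ ⟨y, h⟩ = true := by
  by_contra! h
  exact (xi_le_dist fun hy' => by simpa using h hy').not_gt hy

theorem vacant_iff_of_mem (z : {v // v ∈ Λ}) : Vacant Λ σ z ↔ σ z = false := by
  simp [Vacant]

variable [DecidableEq V]

theorem constr_nonneg (η : V → Bool) (z : {v // v ∈ Λ}) (σ : Conf Λ) :
    0 ≤ constr G Λ η z σ := by
  unfold constr; split <;> norm_num

theorem genMat_mulVec (p q : ℝ) (η : V → Bool) (f : Conf Λ → ℝ) :
    genMat G Λ p q η *ᵥ f = gen G Λ p q η f := by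
  funext σ
  simp only [Matrix.mulVec, dotProduct, genMat, gen, sub_mul, Finset.sum_sub_distrib,
    Finset.sum_mul, mul_sub, mul_assoc, ite_mul, one_mul, zero_mul, mul_ite, mul_zero]
  rw [Finset.sum_comm]
  simp

theorem genMat_mulVec_one (p q : ℝ) (η : V → Bool) :
    genMat G Λ p q η *ᵥ (fun _ => 1) = 0 := by
  rw [genMat_mulVec]; funext σ; simp [gen]

theorem genMat_apply_nonneg_of_ne {p q : ℝ} (hp : 0 ≤ p) (hq : 0 ≤ q) (η : V → Bool)
    {σ τ : Conf Λ} (hστ : σ ≠ τ) : 0 ≤ genMat G Λ p q η σ τ := by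
  rw [genMat, if_neg hστ.symm, sub_zero]
  refine Finset.sum_nonneg fun z _ => mul_nonneg (mul_nonneg (constr_nonneg η z σ) ?_) ?_
  · unfold rate; split <;> assumption
  · split <;> norm_num

theorem vacant_flipAt_iff_of_ne {z : {v // v ∈ Λ}} {y : V} (h : y ≠ z) :
    Vacant Λ (flipAt Λ σ z) y ↔ Vacant Λ σ y := by
  refine forall_congr' fun hy => ?_
  rw [flipAt, Function.update_of_ne fun hz => h (congrArg Subtype.val hz)]

theorem vacant_flipAt_self_iff (z : {v // v ∈ Λ}) :
    Vacant Λ (flipAt Λ σ z) z ↔ σ z = true := by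
  simp [Vacant, flipAt]

theorem xi_flipAt_le_of_eq_true [Infinite V] {z : {v // v ∈ Λ}} (hz : σ z = true) :
    xi G Λ x (flipAt Λ σ z) ≤ xi G Λ x σ := by
  obtain ⟨y, hy, hd⟩ := exists_vacant_dist_eq_xi G Λ x σ
  have hyz : y ≠ z := by rintro rfl; simp [(vacant_iff_of_mem z).1 hy] at hz
  exact hd ▸ xi_le_dist ((vacant_flipAt_iff_of_ne hyz).2 hy)

theorem xi_flipAt_eq_of_eq_false [Infinite V] {z : {v // v ∈ Λ}} (hz : σ z = false) {y : V}
    (hy : Vacant Λ σ y) (hyz : y ≠ z) (hd : G.dist x y = xi G Λ x σ) :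
    xi G Λ x (flipAt Λ σ z) = xi G Λ x σ := by
  refine le_antisymm (hd ▸ xi_le_dist ((vacant_flipAt_iff_of_ne hyz).2 hy)) ?_
  obtain ⟨w, hw, hdw⟩ := exists_vacant_dist_eq_xi G Λ x (flipAt Λ σ z)
  have hwz : w ≠ z := by rintro rfl; simp [(vacant_flipAt_self_iff z).1 hw] at hz
  exact hdw ▸ xi_le_dist ((vacant_flipAt_iff_of_ne hwz).1 hw)

theorem xi_flipAt_le_dist_add_one (hconn : G.Connected) {z : {v // v ∈ Λ}} {w : V}
    (hadj : G.Adj z w) (hw : Vacant Λ σ w) : xi G Λ x (flipAt Λ σ z) ≤ G.dist x z + 1 := by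
  have hwz : w ≠ z := fun h => G.irrefl (h ▸ hadj)
  calc xi G Λ x (flipAt Λ σ z) ≤ G.dist x w := xi_le_dist ((vacant_flipAt_iff_of_ne hwz).2 hw)
    _ ≤ G.dist x z + G.dist z w := hconn.dist_triangle
    _ = G.dist x z + 1 := by rw [SimpleGraph.dist_eq_one_iff_adj.2 hadj]

theorem constr_emptyBC (z : {v // v ∈ Λ}) (σ : Conf Λ) :
    constr G Λ emptyBC z σ = if ∃ w, G.Adj z w ∧ Vacant Λ σ w then 1 else 0 := by
  unfold constr
  congr 1
  refine propext (exists_congr fun w => and_congr_right' ?_)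
  by_cases h : w ∈ Λ <;> simp [h, Vacant, emptyBC]

theorem sum_ite_val_eq_le (y : V) {D : ℝ} (hD : 0 ≤ D) :
    ∑ z : {v // v ∈ Λ}, (if (z : V) = y then D else 0) ≤ D := by
  by_cases hy : y ∈ Λ
  · rw [Fintype.sum_eq_single ⟨y, hy⟩ fun z hz => if_neg fun h => hz (Subtype.ext h)]
    exact (if_pos rfl).le
  · simpa [fun z : {v // v ∈ Λ} => show (z : V) ≠ y from fun h => hy (h ▸ z.2)] using hD

section Drift

variable {θ q : ℝ}

theorem flip_le_of_adj_vacant (hθ : 1 ≤ θ) (hq : 0 ≤ q) {z : {v // v ∈ Λ}}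
    (hz : σ z = true) {w : V} (hadj : G.Adj z w) (hw : Vacant Λ σ w) :
    constr G Λ emptyBC z σ * rate (1 - q) q Λ σ z *
        (θ ^ xi G Λ x (flipAt Λ σ z) - θ ^ xi G Λ x σ) ≤
      q * (θ ^ G.dist x z - θ ^ xi G Λ x σ) := by
  have hle : xi G Λ x (flipAt Λ σ z) ≤ G.dist x z :=
    xi_le_dist ((vacant_flipAt_self_iff z).2 hz)
  rw [constr_emptyBC, if_pos ⟨w, hadj, hw⟩, one_mul]
  simp only [rate, hz, if_true]
  gcongr

variable [Infinite V]

theorem flip_le_of_vacant_dist_eq_xi (hconn : G.Connected) (hθ : 1 ≤ θ) (hq : 0 ≤ q)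
    (hq1 : q ≤ 1) {y : V} (hy : Vacant Λ σ y) (hdy : G.dist x y = xi G Λ x σ)
    (z : {v // v ∈ Λ}) :
    constr G Λ emptyBC z σ * rate (1 - q) q Λ σ z *
        (θ ^ xi G Λ x (flipAt Λ σ z) - θ ^ xi G Λ x σ) ≤
      if (z : V) = y then (1 - q) * (θ ^ (xi G Λ x σ + 1) - θ ^ xi G Λ x σ) else 0 := by
  have hstep : θ ^ xi G Λ x σ ≤ θ ^ (xi G Λ x σ + 1) := pow_le_pow_right₀ hθ (by omega)
  cases hz : σ z with
  | true =>
    have hzy : (z : V) ≠ y := by rintro rfl; simp [(vacant_iff_of_mem z).1 hy] at hz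
    rw [if_neg hzy]
    refine mul_nonpos_of_nonneg_of_nonpos (mul_nonneg (constr_nonneg _ z σ) ?_) ?_
    · simp [rate, hz, hq]
    · exact sub_nonpos.2 (pow_le_pow_right₀ hθ (xi_flipAt_le_of_eq_true hz))
  | false =>
    have hrate : rate (1 - q) q Λ σ z = 1 - q := by simp [rate, hz]
    by_cases hzy : (z : V) = y
    · rw [if_pos hzy, hrate, constr_emptyBC]
      split_ifs with hc
      · obtain ⟨w, hadj, hw⟩ := hc
        have hle := xi_flipAt_le_dist_add_one (x := x) hconn hadj hw
        rw [hzy, hdy] at hle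
        rw [one_mul]
        exact mul_le_mul_of_nonneg_left (by gcongr) (by linarith)
      · rw [zero_mul, zero_mul]
        exact mul_nonneg (by linarith) (by linarith)
    · rw [if_neg hzy, xi_flipAt_eq_of_eq_false hz hy (Ne.symm hzy) hdy, sub_self, mul_zero]

theorem gen_theta_pow_xi_le (hconn : G.Connected) (hθ : 1 ≤ θ) (hq : 0 ≤ q) (hq1 : q ≤ 1) :
    gen G Λ (1 - q) q emptyBC (fun τ => θ ^ xi G Λ x τ) σ ≤
      (1 - q) * (θ ^ (xi G Λ x σ + 1) - θ ^ xi G Λ x σ) := by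
  obtain ⟨y, hy, hdy⟩ := exists_vacant_dist_eq_xi G Λ x σ
  have hD : 0 ≤ (1 - q) * (θ ^ (xi G Λ x σ + 1) - θ ^ xi G Λ x σ) :=
    mul_nonneg (by linarith) (sub_nonneg.2 (pow_le_pow_right₀ hθ (by omega)))
  exact (Finset.sum_le_sum fun z _ => flip_le_of_vacant_dist_eq_xi hconn hθ hq hq1 hy hdy z).trans
    (sum_ite_val_eq_le y hD)

/-- When `ξ = k + 1`, the neighbour `z` of a closest empty site on a geodesic towards `x` is filled
and can be emptied, which brings `ξ` down to `k` at rate `q`. -/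
theorem gen_theta_pow_xi_le_of_xi_eq_succ (hconn : G.Connected) (hθ : 1 ≤ θ) (hq : 0 ≤ q)
    (hq1 : q ≤ 1) {k : ℕ} (hk : xi G Λ x σ = k + 1) :
    gen G Λ (1 - q) q emptyBC (fun τ => θ ^ xi G Λ x τ) σ ≤
      q * (θ ^ k - θ ^ (k + 1)) + (1 - q) * (θ ^ (k + 2) - θ ^ (k + 1)) := by
  obtain ⟨y, hy, hdy⟩ := exists_vacant_dist_eq_xi G Λ x σ
  obtain ⟨z, hadj, hdz⟩ := hconn.exists_adj_dist_eq (hdy.trans hk)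
  have hzξ : G.dist x z < xi G Λ x σ := by omega
  obtain ⟨hzΛ, hzσ⟩ := exists_mem_eq_true_of_dist_lt_xi hzξ
  have hzy : z ≠ y := by rintro rfl; simp [hy hzΛ] at hzσ
  have hsite (z' : {v // v ∈ Λ}) :
      constr G Λ emptyBC z' σ * rate (1 - q) q Λ σ z' *
          (θ ^ xi G Λ x (flipAt Λ σ z') - θ ^ xi G Λ x σ) ≤
        (if z' = ⟨z, hzΛ⟩ then q * (θ ^ k - θ ^ (k + 1)) else 0) +
          if (z' : V) = y then (1 - q) * (θ ^ (k + 2) - θ ^ (k + 1)) else 0 := by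
    by_cases hz' : z' = ⟨z, hzΛ⟩
    · have h := flip_le_of_adj_vacant (x := x) hθ hq hzσ hadj hy
      rw [hdz, hk] at h
      rwa [hz', if_pos rfl, if_neg hzy, add_zero, hk]
    · have h := flip_le_of_vacant_dist_eq_xi hconn hθ hq hq1 hy hdy z'
      rw [hk] at h
      rwa [if_neg hz', zero_add, hk]
  refine (Finset.sum_le_sum fun z' _ => hsite z').trans ?_
  rw [Finset.sum_add_distrib, Fintype.sum_ite_eq']
  gcongr
  exact sum_ite_val_eq_le y
    (mul_nonneg (by linarith) (sub_nonneg.2 (pow_le_pow_right₀ hθ (by omega))))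

theorem gen_theta_pow_xi_le_drift (hconn : G.Connected) (hθ : 1 ≤ θ) (hq : θ / (θ + 1) < q)
    (hq1 : q ≤ 1) (σ : Conf Λ) :
    gen G Λ (1 - q) q emptyBC (fun τ => θ ^ xi G Λ x τ) σ ≤
      -(((θ ^ 2 - 1) / θ) * (q - θ / (θ + 1))) *
        (θ ^ xi G Λ x σ - q / (q * (θ + 1) - θ)) := by
  have hθ0 : 0 < θ := by linarith
  have hD : 0 < q * (θ + 1) - θ := by
    have := (div_lt_iff₀ (by linarith)).1 hq
    linarith
  have hq0 : 0 ≤ q := (div_nonneg hθ0.le (by linarith)).trans hq.le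
  have hlam : (θ ^ 2 - 1) / θ * (q - θ / (θ + 1)) = (θ - 1) * (q * (θ + 1) - θ) / θ := by
    field_simp
    ring
  rw [hlam]
  rcases hk : xi G Λ x σ with _ | k
  · calc gen G Λ (1 - q) q emptyBC (fun τ => θ ^ xi G Λ x τ) σ
        ≤ (1 - q) * (θ ^ 1 - θ ^ 0) := by
          simpa [hk] using gen_theta_pow_xi_le (x := x) (σ := σ) hconn hθ hq0 hq1
      _ = _ := by
          field_simp
          ring
  · have hC : 0 ≤ (θ - 1) * (q * (θ + 1) - θ) / θ * (q / (q * (θ + 1) - θ)) := by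
      have : 0 ≤ θ - 1 := by linarith
      positivity
    calc gen G Λ (1 - q) q emptyBC (fun τ => θ ^ xi G Λ x τ) σ
        ≤ q * (θ ^ k - θ ^ (k + 1)) + (1 - q) * (θ ^ (k + 2) - θ ^ (k + 1)) :=
          gen_theta_pow_xi_le_of_xi_eq_succ hconn hθ hq0 hq1 hk
      _ = -((θ - 1) * (q * (θ + 1) - θ) / θ) * θ ^ (k + 1) := by
          field_simp
          ring
      _ ≤ _ := by linarith

end Drift

theorem statement4_general [Infinite V] (G : SimpleGraph V)
    (hconn : G.Connected)
    (Λ : Finset V) (x : V)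
    (θ q : ℝ) (hθ : 1 ≤ θ) (hq : q ∈ Set.Ioc (θ / (θ + 1)) 1)
    (η : Conf Λ) (t : ℝ) (ht : 0 ≤ t) :
    semigroup G Λ (1 - q) q emptyBC t (fun σ => θ ^ xi G Λ x σ) η ≤
      θ ^ xi G Λ x η * Real.exp (-(((θ ^ 2 - 1) / θ) * (q - θ / (θ + 1))) * t) +
        q / (q * (θ + 1) - θ) := by
  obtain ⟨hqθ, hq1⟩ := hq
  have hθ1 : 0 < θ + 1 := by linarith
  have hq0 : 0 < q := (div_pos (by linarith) hθ1).trans hqθ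
  have hC : 0 ≤ q / (q * (θ + 1) - θ) := by
    have := (div_lt_iff₀ hθ1).1 hqθ
    exact div_nonneg hq0.le (by linarith)
  have hsemigroup := Matrix.exp_smul_mulVec_apply_le_of_drift
    (fun σ τ hστ => genMat_apply_nonneg_of_ne (by linarith) hq0.le emptyBC hστ)
    (genMat_mulVec_one (G := G) (1 - q) q emptyBC)
    (fun σ => (congrFun (genMat_mulVec (1 - q) q emptyBC fun τ => θ ^ xi G Λ x τ) σ).trans_le
      (gen_theta_pow_xi_le_drift hconn hθ hqθ hq1 σ)) ht η
  have hCexp := mul_nonneg hC (Real.exp_pos (-(((θ ^ 2 - 1) / θ) * (q - θ / (θ + 1))) * t)).le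
  unfold semigroup
  linarith

/-- **Proposition 4.1 (persistence of zeros out of equilibrium).** For the finite-volume FA1f
process with empty boundary condition, for every `θ ≥ 1`, `q ∈ (θ/(θ+1), 1]` and every initial
configuration `η`, `E_η(θ^{ξ^x(σ_t^Λ)}) ≤ θ^{ξ^x(η)} e^{-λt} + q/(q(θ+1)-θ)` where
`λ = ((θ²-1)/θ)(q - θ/(θ+1))`. -/
theorem statement4 [Infinite V] (G : SimpleGraph V)
    (hloc : ∀ v : V, (G.neighborSet v).Finite) (hconn : G.Connected)
    (Λ : Finset V) (x : V) (hx : x ∈ Λ)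
    (θ q : ℝ) (hθ : 1 ≤ θ) (hq : q ∈ Set.Ioc (θ / (θ + 1)) 1)
    (η : Conf Λ) (t : ℝ) (ht : 0 ≤ t) :
    semigroup G Λ (1 - q) q emptyBC t (fun σ => θ ^ xi G Λ x σ) η ≤
      θ ^ xi G Λ x η * Real.exp (-(((θ ^ 2 - 1) / θ) * (q - θ / (θ + 1))) * t) +
        q / (q * (θ + 1) - θ) :=
  statement4_general G hconn Λ x θ q hθ hq η t ht

end FA1f
end
end

section
/- Let G=(V,E) be a locally finite connected graph, A⊆V a finite connected set, z∈∂A, and let ≤ be a linear order on A such that x≤y whenever d(x,z)>d(y,z); for x∈A set Ã_x={y∈A : y>x}. For each x∈A let E_x be a subset of {0,1}^{Ã_x} and let Δ_x⊆Ã_x be the set of coordinates on which the indicator of E_x actually depends; define c̃_x(σ)=1_{E_x}(σ restricted to Ã_x) for σ∈Ω_A. Assume that ( sup_{x∈A} μ_A(1−c̃_x) ) · ( sup_{x∈A} |{y∈A : x∈Δ_y∪{y}}| ) < 1/4. Then for every f:Ω_A→ℝ, Var_{μ_A}(f) ≤ 4·Σ_{x∈A} μ_A( c̃_x · Var_x(f)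 ). -/
/-!
Order the sites by `ord` and let `μ_{≥k}` average out the sites of rank at least `k`. The
martingale increments `d_x = μ_{>x} f - μ_{≥x} f` are orthogonal, so `Var f = ∑_x μ(d_x²)`,
and `μ(d_x²) = μ(Var_x(μ_{>x} f)) = p q μ((μ_{>x} ∇_x f)²)`.
Split `∇_x f = c̃_x ∇_x f + (1 - c̃_x) ∇_x f`. By Jensen the first part contributes at most
`μ(c̃_x Var_x f)`. Since `1 - c̃_x` only depends on `Δ_x`, which lies after `x`, averaging kills
every increment `d_y` of `f` with `y ∉ Δ_x ∪ {x}`, and Cauchy–Schwarz bounds the second part by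
`μ(1 - c̃_x) ∑_{y ∈ Δ_x ∪ {x}} μ(d_y²)`. Summing over `x` gives
`Var f ≤ 2 ∑_x μ(c̃_x Var_x f) + 2 ε κ Var f` with `ε κ < 1/4`.
-/

open scoped Classical

noncomputable section

namespace FA1f

variable {V : Type*} [DecidableEq V]

open Function

section SingleSite

variable {ι : Type*} [DecidableEq ι] {p q : ℝ}

@[simp] lemma bw_true (p q : ℝ) : bw p q true = p := rfl

@[simp] lemma bw_false (p q : ℝ) : bw p q false = q := rfl

lemma bw_nonneg (hp : 0 ≤ p) (hq : 0 ≤ q) (b : Bool) : 0 ≤ bw p q b := by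
  cases b <;> assumption

def avgAt (p q : ℝ) (i : ι) (f : (ι → Bool) → ℝ) (σ : ι → Bool) : ℝ :=
  p * f (update σ i true) + q * f (update σ i false)

def grad (i : ι) (f : (ι → Bool) → ℝ) (σ : ι → Bool) : ℝ :=
  f (update σ i true) - f (update σ i false)

def IndepOf (i : ι) (f : (ι → Bool) → ℝ) : Prop :=
  ∀ σ b, f (update σ i b) = f σ

lemma avgAt_add (i : ι) (f g : (ι → Bool) → ℝ) :
    avgAt p q i (fun σ => f σ + g σ) = fun σ => avgAt p q i f σ + avgAt p q i g σ := by
  funext σ; simp only [avgAt]; ring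

lemma avgAt_mono (hp : 0 ≤ p) (hq : 0 ≤ q) (i : ι) {f g : (ι → Bool) → ℝ}
    (h : ∀ σ, f σ ≤ g σ) (σ : ι → Bool) : avgAt p q i f σ ≤ avgAt p q i g σ :=
  add_le_add (mul_le_mul_of_nonneg_left (h _) hp) (mul_le_mul_of_nonneg_left (h _) hq)

lemma avgAt_of_indepOf (hpq : p + q = 1) {i : ι} {f : (ι → Bool) → ℝ} (h : IndepOf i f) :
    avgAt p q i f = f := by
  funext σ
  rw [avgAt, h σ true, h σ false]
  linear_combination f σ * hpq

lemma indepOf_avgAt (i : ι) (f : (ι → Bool) → ℝ) : IndepOf i (avgAt p q i f) := by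
  intro σ b
  simp only [avgAt, update_idem]

lemma IndepOf.avgAt {i j : ι} (hij : j ≠ i) {f : (ι → Bool) → ℝ} (h : IndepOf j f) :
    IndepOf j (avgAt p q i f) := by
  intro σ b
  simp only [FA1f.avgAt]
  rw [update_comm hij, update_comm hij, h, h]

lemma avgAt_avgAt (hpq : p + q = 1) (i : ι) (f : (ι → Bool) → ℝ) :
    avgAt p q i (avgAt p q i f) = avgAt p q i f :=
  avgAt_of_indepOf hpq (indepOf_avgAt i f)

lemma avgAt_comm {i j : ι} (hij : i ≠ j) (f : (ι → Bool) → ℝ) :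
    avgAt p q i (avgAt p q j f) = avgAt p q j (avgAt p q i f) := by
  funext σ
  simp only [avgAt, update_comm hij]
  ring

lemma grad_avgAt {i j : ι} (hij : i ≠ j) (f : (ι → Bool) → ℝ) :
    grad i (avgAt p q j f) = avgAt p q j (grad i f) := by
  funext σ
  simp only [grad, avgAt, update_comm hij]
  ring

lemma grad_sub (i : ι) (f g : (ι → Bool) → ℝ) :
    grad i (fun σ => f σ - g σ) = fun σ => grad i f σ - grad i g σ := by
  funext σ; simp only [grad]; ring

lemma IndepOf.grad_eq_zero {i : ι} {f : (ι → Bool) → ℝ} (h : IndepOf i f) :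
    grad i f = fun _ => 0 := by
  funext σ
  rw [grad, h, h, sub_self]

lemma avgAt_sq_sub_sq (hpq : p + q = 1) (i : ι) (f : (ι → Bool) → ℝ) (σ : ι → Bool) :
    avgAt p q i (fun τ => f τ ^ 2) σ - avgAt p q i f σ ^ 2 = p * q * grad i f σ ^ 2 := by
  obtain rfl : q = 1 - p := by linarith
  simp only [avgAt, grad]
  ring

lemma avgAt_sq_sub_avgAt (hpq : p + q = 1) (i : ι) (f : (ι → Bool) → ℝ) (σ : ι → Bool) :
    avgAt p q i (fun τ => (f τ - avgAt p q i f τ) ^ 2) σ = p * q * grad i f σ ^ 2 := by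
  obtain rfl : q = 1 - p := by linarith
  simp only [avgAt, grad, update_idem]
  ring

lemma sq_avgAt_le (hpq : p + q = 1) (hp : 0 ≤ p) (hq : 0 ≤ q) (i : ι)
    (f : (ι → Bool) → ℝ) (σ : ι → Bool) :
    avgAt p q i f σ ^ 2 ≤ avgAt p q i (fun τ => f τ ^ 2) σ := by
  have := avgAt_sq_sub_sq hpq i f σ
  nlinarith [mul_nonneg (mul_nonneg hp hq) (sq_nonneg (grad i f σ))]

lemma mul_grad_sq_le_avgAt (hpq : p + q = 1) (i : ι)
    (f : (ι → Bool) → ℝ) (σ : ι → Bool) :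
    p * q * grad i f σ ^ 2 ≤ avgAt p q i (fun τ => f τ ^ 2) σ := by
  rw [← avgAt_sq_sub_sq hpq]
  linarith [sq_nonneg (avgAt p q i f σ)]

lemma avgAt_mul_sub_avgAt (hpq : p + q = 1) {i : ι} {u : (ι → Bool) → ℝ} (hu : IndepOf i u)
    (h : (ι → Bool) → ℝ) :
    avgAt p q i (fun σ => u σ * (h σ - avgAt p q i h σ)) = fun _ => 0 := by
  funext σ
  have hA := congrFun (avgAt_avgAt (p := p) (q := q) hpq i h) σ
  simp only [avgAt, update_idem] at hA ⊢
  rw [hu σ true, hu σ false]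
  linear_combination (-u σ) * hA

lemma update_funSplitAt_symm (i : ι) (b b' : Bool) (ρ : {j // j ≠ i} → Bool) :
    update ((Equiv.funSplitAt i Bool).symm (b, ρ)) i b' =
      (Equiv.funSplitAt i Bool).symm (b', ρ) := by
  ext j
  by_cases h : j = i
  · subst h; simp
  · simp [h]

lemma indepOf_ite_of_dependsOn {S : Set (ι → Bool)} {D : Finset ι}
    (hS : ∀ σ τ, (∀ i ∈ D, σ i = τ i) → (σ ∈ S ↔ τ ∈ S)) (a b : ℝ) {i : ι} (hi : i ∉ D) :
    IndepOf i (fun σ => if σ ∈ S then a else b) := fun σ c =>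
  if_congr (hS _ _ fun _ hj => update_of_ne (ne_of_mem_of_not_mem hj hi) c σ) rfl rfl

end SingleSite

section AverageList

variable {ι : Type*} [DecidableEq ι] {p q : ℝ}

def avgList (p q : ℝ) : List ι → ((ι → Bool) → ℝ) → (ι → Bool) → ℝ
  | [], f => f
  | i :: l, f => avgAt p q i (avgList p q l f)

lemma avgList_add (l : List ι) (f g : (ι → Bool) → ℝ) :
    avgList p q l (fun σ => f σ + g σ) = fun σ => avgList p q l f σ + avgList p q l g σ := by
  induction l with
  | nil => rfl
  | cons i l ih => rw [avgList, ih, avgAt_add]; rfl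

lemma avgList_const_mul (l : List ι) (r : ℝ) (f : (ι → Bool) → ℝ) :
    avgList p q l (fun σ => r * f σ) = fun σ => r * avgList p q l f σ := by
  induction l with
  | nil => rfl
  | cons i l ih => funext σ; simp only [avgList, ih, avgAt]; ring

lemma avgList_zero (l : List ι) : avgList p q l (fun _ => 0) = fun _ => 0 := by
  induction l with
  | nil => rfl
  | cons i l ih => funext σ; simp [avgList, ih, avgAt]

lemma avgList_sum {α : Type*} (l : List ι) (s : Finset α) (F : α → (ι → Bool) → ℝ) :
    avgList p q l (fun σ => ∑ a ∈ s, F a σ) = fun σ => ∑ a ∈ s, avgList p q l (F a) σ := by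
  induction s using Finset.induction_on with
  | empty => simpa using avgList_zero l
  | insert a s ha ih => simp only [Finset.sum_insert ha, avgList_add, ih]

lemma avgList_mono (hp : 0 ≤ p) (hq : 0 ≤ q) (l : List ι) {f g : (ι → Bool) → ℝ}
    (h : ∀ σ, f σ ≤ g σ) (σ : ι → Bool) : avgList p q l f σ ≤ avgList p q l g σ := by
  induction l generalizing σ with
  | nil => exact h σ
  | cons i l ih => exact avgAt_mono hp hq i ih σ

lemma IndepOf.avgList {j : ι} {f : (ι → Bool) → ℝ} (h : IndepOf j f) (l : List ι) :
    IndepOf j (avgList p q l f) := by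
  induction l with
  | nil => exact h
  | cons i l ih =>
    by_cases hij : j = i
    · subst hij; exact indepOf_avgAt j _
    · exact ih.avgAt hij

lemma indepOf_avgList {l : List ι} {j : ι} (h : j ∈ l) (f : (ι → Bool) → ℝ) :
    IndepOf j (avgList p q l f) := by
  induction l with
  | nil => simp at h
  | cons i l ih =>
    by_cases hij : j = i
    · subst hij; exact indepOf_avgAt j _
    · exact (ih (List.mem_of_ne_of_mem hij h)).avgAt hij

lemma avgList_avgAt_comm (l : List ι) (i : ι) (f : (ι → Bool) → ℝ) :
    avgList p q l (avgAt p q i f) = avgAt p q i (avgList p q l f) := by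
  induction l with
  | nil => rfl
  | cons j l ih =>
    rw [avgList, avgList, ih]
    by_cases hij : j = i
    · rw [hij]
    · exact avgAt_comm hij _

lemma avgList_perm {l l' : List ι} (h : l.Perm l') (f : (ι → Bool) → ℝ) :
    avgList p q l f = avgList p q l' f := by
  induction h with
  | nil => rfl
  | cons i _ ih => rw [avgList, avgList, ih]
  | swap i j l =>
    by_cases hij : j = i
    · rw [hij]
    · exact avgAt_comm hij _
  | trans _ _ ih₁ ih₂ => rw [ih₁, ih₂]

lemma avgList_avgAt_of_mem (hpq : p + q = 1) {l : List ι} {i : ι} (hi : i ∈ l)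
    (f : (ι → Bool) → ℝ) : avgList p q l (avgAt p q i f) = avgList p q l f := by
  induction l with
  | nil => simp at hi
  | cons j l ih =>
    rw [avgList, avgList]
    by_cases hij : i = j
    · rw [hij, avgList_avgAt_comm, avgAt_avgAt hpq]
    · rw [ih (List.mem_of_ne_of_mem hij hi)]

lemma grad_avgList {l : List ι} {i : ι} (h : i ∉ l) (f : (ι → Bool) → ℝ) :
    grad i (avgList p q l f) = avgList p q l (grad i f) := by
  induction l with
  | nil => rfl
  | cons j l ih =>
    rw [avgList, avgList, grad_avgAt (List.ne_of_not_mem_cons h),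
      ih (List.not_mem_of_not_mem_cons h)]

lemma avgList_mul_sub_avgAt (hpq : p + q = 1) {l : List ι} {i : ι} (hi : i ∈ l)
    {u : (ι → Bool) → ℝ} (hu : IndepOf i u) (h : (ι → Bool) → ℝ) :
    avgList p q l (fun σ => u σ * (h σ - avgAt p q i h σ)) = fun _ => 0 := by
  rw [← avgList_avgAt_of_mem hpq hi, avgAt_mul_sub_avgAt hpq hu, avgList_zero]

lemma sq_avgList_le (hpq : p + q = 1) (hp : 0 ≤ p) (hq : 0 ≤ q) (l : List ι)
    (f : (ι → Bool) → ℝ) (σ : ι → Bool) :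
    avgList p q l f σ ^ 2 ≤ avgList p q l (fun τ => f τ ^ 2) σ := by
  induction l generalizing σ with
  | nil => exact le_rfl
  | cons i l ih => exact (sq_avgAt_le hpq hp hq i _ σ).trans (avgAt_mono hp hq i ih σ)

lemma sq_avgList_mul_le (hp : 0 ≤ p) (hq : 0 ≤ q) (l : List ι) (f g : (ι → Bool) → ℝ)
    (σ : ι → Bool) :
    avgList p q l (fun τ => f τ * g τ) σ ^ 2 ≤
      avgList p q l (fun τ => f τ ^ 2) σ * avgList p q l (fun τ => g τ ^ 2) σ := by
  have hquad : ∀ t : ℝ, 0 ≤ avgList p q l (fun τ => f τ ^ 2) σ * (t * t) +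
      2 * avgList p q l (fun τ => f τ * g τ) σ * t + avgList p q l (fun τ => g τ ^ 2) σ := by
    intro t
    have hexp : (fun τ => (t * f τ + g τ) ^ 2) =
        fun τ => (t ^ 2 * f τ ^ 2 + 2 * t * (f τ * g τ)) + g τ ^ 2 := by
      funext τ; ring
    have h0 := avgList_mono hp hq l (fun τ => sq_nonneg (t * f τ + g τ)) σ
    rw [avgList_zero, hexp, avgList_add, avgList_add, avgList_const_mul,
      avgList_const_mul] at h0
    linarith
  have hdisc := discrim_le_zero hquad
  rw [discrim] at hdisc
  linarith

end AverageList

section Expectation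

variable {ι : Type*} [Fintype ι] {p q : ℝ}

def weight (p q : ℝ) (σ : ι → Bool) : ℝ := ∏ i, bw p q (σ i)

lemma weight_nonneg (hp : 0 ≤ p) (hq : 0 ≤ q) (σ : ι → Bool) : 0 ≤ weight p q σ :=
  Finset.prod_nonneg fun _ _ => bw_nonneg hp hq _

variable [DecidableEq ι]

def expect (p q : ℝ) (f : (ι → Bool) → ℝ) : ℝ := ∑ σ, weight p q σ * f σ

lemma expect_add (f g : (ι → Bool) → ℝ) :
    expect p q (fun σ => f σ + g σ) = expect p q f + expect p q g := by
  simp only [expect, mul_add, Finset.sum_add_distrib]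

lemma expect_sub (f g : (ι → Bool) → ℝ) :
    expect p q (fun σ => f σ - g σ) = expect p q f - expect p q g := by
  simp only [expect, mul_sub, Finset.sum_sub_distrib]

lemma expect_const_mul (r : ℝ) (f : (ι → Bool) → ℝ) :
    expect p q (fun σ => r * f σ) = r * expect p q f := by
  simp only [expect, Finset.mul_sum]
  exact Finset.sum_congr rfl fun σ _ => by ring

lemma expect_sum {α : Type*} (s : Finset α) (F : α → (ι → Bool) → ℝ) :
    expect p q (fun σ => ∑ a ∈ s, F a σ) = ∑ a ∈ s, expect p q (F a) := by
  simp only [expect, Finset.mul_sum]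
  exact Finset.sum_comm

lemma expect_mono (hp : 0 ≤ p) (hq : 0 ≤ q) {f g : (ι → Bool) → ℝ} (h : ∀ σ, f σ ≤ g σ) :
    expect p q f ≤ expect p q g :=
  Finset.sum_le_sum fun σ _ => mul_le_mul_of_nonneg_left (h σ) (weight_nonneg hp hq σ)

lemma expect_nonneg (hp : 0 ≤ p) (hq : 0 ≤ q) {f : (ι → Bool) → ℝ} (h : ∀ σ, 0 ≤ f σ) :
    0 ≤ expect p q f :=
  Finset.sum_nonneg fun σ _ => mul_nonneg (weight_nonneg hp hq σ) (h σ)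

lemma expect_const (hpq : p + q = 1) (r : ℝ) : expect p q (fun _ : ι → Bool => r) = r := by
  simp only [expect, weight, ← Finset.sum_mul, ← Fintype.prod_sum, Fintype.sum_bool, bw_true,
    bw_false, hpq, Finset.prod_const_one, one_mul]

lemma expect_sq_sub_expect (hpq : p + q = 1) (f : (ι → Bool) → ℝ) :
    expect p q (fun σ => (f σ - expect p q f) ^ 2) =
      expect p q (fun σ => f σ ^ 2) - expect p q f ^ 2 := by
  have hexp : (fun σ => (f σ - expect p q f) ^ 2) =
      fun σ => f σ ^ 2 - (2 * expect p q f * f σ - expect p q f ^ 2) := by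
    funext σ; ring
  rw [hexp, expect_sub, expect_sub, expect_const_mul, expect_const hpq]
  ring

lemma sum_funSplitAt (i : ι) (F : (ι → Bool) → ℝ) :
    ∑ σ, F σ = ∑ ρ : {j // j ≠ i} → Bool, ∑ b, F ((Equiv.funSplitAt i Bool).symm (b, ρ)) := by
  rw [← (Equiv.funSplitAt i Bool).symm.sum_comp, Fintype.sum_prod_type, Finset.sum_comm]

lemma weight_funSplitAt_symm (i : ι) (b : Bool) (ρ : {j // j ≠ i} → Bool) :
    weight p q ((Equiv.funSplitAt i Bool).symm (b, ρ)) = bw p q b * ∏ j, bw p q (ρ j) := by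
  rw [weight, Fintype.prod_eq_mul_prod_subtype_ne _ i]
  congr 1
  · simp
  · exact Fintype.prod_congr _ _ fun j => by simp [j.2]

lemma expect_avgAt (hpq : p + q = 1) (i : ι) (f : (ι → Bool) → ℝ) :
    expect p q (avgAt p q i f) = expect p q f := by
  simp only [expect, avgAt, sum_funSplitAt i, weight_funSplitAt_symm, update_funSplitAt_symm,
    Fintype.sum_bool, bw_true, bw_false]
  refine Finset.sum_congr rfl fun ρ _ => ?_
  linear_combination (∏ j, bw p q (ρ j)) * (p * f ((Equiv.funSplitAt i Bool).symm (true, ρ)) +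
    q * f ((Equiv.funSplitAt i Bool).symm (false, ρ))) * hpq

lemma expect_avgList (hpq : p + q = 1) (l : List ι) (f : (ι → Bool) → ℝ) :
    expect p q (avgList p q l f) = expect p q f := by
  induction l with
  | nil => rfl
  | cons i l ih => rw [avgList, expect_avgAt hpq, ih]

lemma eq_expect_of_forall_indepOf (hpq : p + q = 1) {f : (ι → Bool) → ℝ}
    (h : ∀ i, IndepOf i f) (σ : ι → Bool) : f σ = expect p q f := by
  have hconst : ∀ τ, f τ = f σ := by
    suffices ∀ s : Finset ι, ∀ τ, (∀ j ∉ s, τ j = σ j) → f τ = f σ from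
      fun τ => this Finset.univ τ (by simp)
    intro s
    induction s using Finset.induction_on with
    | empty => intro τ hτ; congr; funext j; exact hτ j (Finset.notMem_empty j)
    | insert i s hi ih =>
      intro τ hτ
      rw [← h i τ (σ i)]
      refine ih _ fun j hj => ?_
      by_cases hji : j = i
      · subst hji; simp
      · rw [update_of_ne hji]; exact hτ j (by simp [hji, hj])
  calc f σ = expect p q (fun _ => f σ) := (expect_const hpq _).symm
    _ = expect p q f := congrArg _ (funext fun τ => (hconst τ).symm)

lemma avgList_eq_expect (hpq : p + q = 1) {l : List ι} {u : (ι → Bool) → ℝ}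
    (hu : ∀ i ∉ l, IndepOf i u) (σ : ι → Bool) : avgList p q l u σ = expect p q u := by
  rw [eq_expect_of_forall_indepOf hpq (f := avgList p q l u) (fun i => ?_) σ, expect_avgList hpq]
  by_cases hi : i ∈ l
  · exact indepOf_avgList hi u
  · exact (hu i hi).avgList l

lemma expect_mul_sub_avgAt (hpq : p + q = 1) {i : ι} {u : (ι → Bool) → ℝ} (hu : IndepOf i u)
    (h : (ι → Bool) → ℝ) : expect p q (fun σ => u σ * (h σ - avgAt p q i h σ)) = 0 := by
  rw [← expect_avgAt hpq i, avgAt_mul_sub_avgAt hpq hu, expect_const hpq]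

lemma expect_sq_sub_avgAt (hpq : p + q = 1) (i : ι) (f : (ι → Bool) → ℝ) :
    expect p q (fun σ => (f σ - avgAt p q i f σ) ^ 2) =
      expect p q (fun σ => p * q * grad i f σ ^ 2) := by
  rw [← expect_avgAt hpq i]
  exact congrArg _ (funext (avgAt_sq_sub_avgAt hpq i f))

lemma expect_mul_grad_sq_le (hpq : p + q = 1) (hp : 0 ≤ p) (hq : 0 ≤ q) (i : ι)
    (f : (ι → Bool) → ℝ) :
    expect p q (fun σ => p * q * grad i f σ ^ 2) ≤ expect p q (fun σ => f σ ^ 2) := by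
  rw [← expect_avgAt hpq i (fun σ => f σ ^ 2)]
  exact expect_mono hp hq (mul_grad_sq_le_avgAt hpq i f)

lemma expect_sq_sum_of_orthogonal {α : Type*} (s : Finset α) (F : α → (ι → Bool) → ℝ)
    (horth : ∀ a ∈ s, ∀ b ∈ s, a ≠ b → expect p q (fun σ => F a σ * F b σ) = 0) :
    expect p q (fun σ => (∑ a ∈ s, F a σ) ^ 2) = ∑ a ∈ s, expect p q (fun σ => F a σ ^ 2) := by
  simp only [sq, Finset.sum_mul_sum, expect_sum]
  refine Finset.sum_congr rfl fun a ha => ?_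
  rw [Finset.sum_eq_single a (fun b hb hba => horth a ha b hb (Ne.symm hba)) (absurd ha)]

end Expectation

section Increments

variable {ι : Type*} [Fintype ι] {n : ℕ} {p q : ℝ}

/- Averaging over `tail e k` integrates out the sites of rank at least `k`: it is the conditional
expectation given the sites of rank below `k`. -/
def tail (e : ι ≃ Fin n) (k : ℕ) : List ι :=
  (Finset.univ.filter fun i => k ≤ (e i : ℕ)).toList

lemma mem_tail {e : ι ≃ Fin n} {k : ℕ} {i : ι} : i ∈ tail e k ↔ k ≤ (e i : ℕ) := by
  simp [tail]

lemma tail_perm (e : ι ≃ Fin n) (i : ι) : (tail e (e i)).Perm (i :: tail e (e i + 1)) := by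
  have hnodup : ∀ k, (tail e k).Nodup := fun _ => Finset.nodup_toList _
  refine (List.perm_ext_iff_of_nodup (hnodup _)
    (List.nodup_cons.2 ⟨fun h => by simpa using mem_tail.1 h, hnodup _⟩)).2 fun j => ?_
  rw [List.mem_cons, mem_tail, mem_tail]
  constructor
  · intro h
    rcases h.eq_or_lt with h | h
    · exact Or.inl (e.injective (Fin.ext h.symm))
    · exact Or.inr h
  · rintro (rfl | h) <;> omega

variable [DecidableEq ι]

lemma avgList_tail_self (e : ι ≃ Fin n) (i : ι) (f : (ι → Bool) → ℝ) :
    avgList p q (tail e (e i)) f = avgAt p q i (avgList p q (tail e (e i + 1)) f) :=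
  avgList_perm (tail_perm e i) f

lemma avgList_tail_zero (hpq : p + q = 1) (e : ι ≃ Fin n) (f : (ι → Bool) → ℝ)
    (σ : ι → Bool) : avgList p q (tail e 0) f σ = expect p q f :=
  avgList_eq_expect hpq (fun _ hi => absurd (mem_tail.2 (Nat.zero_le _)) hi) σ

lemma avgList_tail_card (e : ι ≃ Fin n) (f : (ι → Bool) → ℝ) :
    avgList p q (tail e n) f = f := by
  have : tail e n = [] := by simp [tail, Finset.filter_eq_empty_iff]
  rw [this, avgList]

def increment (p q : ℝ) (e : ι ≃ Fin n) (i : ι) (f : (ι → Bool) → ℝ) (σ : ι → Bool) : ℝ :=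
  avgList p q (tail e (e i + 1)) f σ - avgList p q (tail e (e i)) f σ

lemma increment_eq (e : ι ≃ Fin n) (i : ι) (f : (ι → Bool) → ℝ) :
    increment p q e i f = fun σ => avgList p q (tail e (e i + 1)) f σ -
      avgAt p q i (avgList p q (tail e (e i + 1)) f) σ := by
  funext σ
  rw [increment, avgList_tail_self]

lemma sum_increment (hpq : p + q = 1) (e : ι ≃ Fin n) (f : (ι → Bool) → ℝ) (σ : ι → Bool) :
    ∑ i, increment p q e i f σ = f σ - expect p q f := by
  let A : ℕ → ℝ := fun k => avgList p q (tail e k) f σ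
  calc ∑ i, increment p q e i f σ = ∑ j : Fin n, (A (j + 1) - A j) :=
        e.sum_comp (fun j : Fin n => A (j + 1) - A j)
    _ = A n - A 0 := by
        rw [Fin.sum_univ_eq_sum_range (fun k => A (k + 1) - A k), Finset.sum_range_sub]
    _ = f σ - expect p q f := by simp only [A, avgList_tail_card, avgList_tail_zero hpq]

lemma indepOf_increment {e : ι ≃ Fin n} {i j : ι} (h : e i < e j) (f : (ι → Bool) → ℝ) :
    IndepOf j (increment p q e i f) := by
  have h₁ : j ∈ tail e (e i + 1) := mem_tail.2 h
  have h₂ : j ∈ tail e (e i) := mem_tail.2 h.le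
  intro σ b
  rw [increment, increment, indepOf_avgList h₁ f σ b, indepOf_avgList h₂ f σ b]

lemma expect_increment_mul_increment (hpq : p + q = 1) (e : ι ≃ Fin n)
    (f : (ι → Bool) → ℝ) {i j : ι} (hij : i ≠ j) :
    expect p q (fun σ => increment p q e i f σ * increment p q e j f σ) = 0 := by
  wlog h : e i < e j generalizing i j
  · simp_rw [mul_comm (increment p q e i f _)]
    exact this hij.symm ((e.injective.ne hij).symm.lt_of_le (not_lt.1 h))
  rw [increment_eq e j]
  exact expect_mul_sub_avgAt hpq (indepOf_increment h f) _

lemma expect_sq_sum_increment (hpq : p + q = 1) (e : ι ≃ Fin n) (f : (ι → Bool) → ℝ)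
    (s : Finset ι) :
    expect p q (fun σ => (∑ i ∈ s, increment p q e i f σ) ^ 2) =
      ∑ i ∈ s, expect p q (fun σ => increment p q e i f σ ^ 2) :=
  expect_sq_sum_of_orthogonal s _ fun _ _ _ _ => expect_increment_mul_increment hpq e f

lemma variance_eq_sum_increment (hpq : p + q = 1) (e : ι ≃ Fin n) (f : (ι → Bool) → ℝ) :
    expect p q (fun σ => f σ ^ 2) - expect p q f ^ 2 =
      ∑ i, expect p q (fun σ => increment p q e i f σ ^ 2) := by
  rw [← expect_sq_sum_increment hpq, ← expect_sq_sub_expect hpq]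
  simp only [sum_increment hpq]

lemma expect_sq_increment (hpq : p + q = 1) (e : ι ≃ Fin n) (i : ι) (f : (ι → Bool) → ℝ) :
    expect p q (fun σ => increment p q e i f σ ^ 2) =
      expect p q (fun σ => p * q * avgList p q (tail e (e i + 1)) (grad i f) σ ^ 2) := by
  rw [increment_eq, expect_sq_sub_avgAt hpq,
    grad_avgList (fun h => by simpa using mem_tail.1 h) f]

end Increments

section VertexBound

variable {ι : Type*} [Fintype ι] [DecidableEq ι] {n : ℕ} {p q : ℝ}

lemma expect_sq_avgList_mul_le (hpq : p + q = 1) (hp : 0 ≤ p) (hq : 0 ≤ q) (l : List ι)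
    {c : (ι → Bool) → ℝ} (hc : ∀ σ, c σ ^ 2 = c σ) (φ : (ι → Bool) → ℝ) :
    expect p q (fun σ => p * q * avgList p q l (fun τ => c τ * φ τ) σ ^ 2) ≤
      expect p q (fun σ => c σ * (p * q * φ σ ^ 2)) :=
  calc expect p q (fun σ => p * q * avgList p q l (fun τ => c τ * φ τ) σ ^ 2)
      ≤ expect p q (fun σ => p * q * avgList p q l (fun τ => (c τ * φ τ) ^ 2) σ) :=
        expect_mono hp hq fun σ =>
          mul_le_mul_of_nonneg_left (sq_avgList_le hpq hp hq l _ σ) (mul_nonneg hp hq)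
    _ = expect p q (fun σ => p * q * (c σ * φ σ) ^ 2) := by
        rw [expect_const_mul, expect_const_mul, expect_avgList hpq]
    _ = expect p q (fun σ => c σ * (p * q * φ σ ^ 2)) :=
        congrArg _ (funext fun σ => by rw [mul_pow, hc]; ring)

lemma avgList_mul_grad_increment (hpq : p + q = 1) (e : ι ≃ Fin n) {i y : ι} (hiy : i ≠ y)
    {u : (ι → Bool) → ℝ} (hu : IndepOf i u) (f : (ι → Bool) → ℝ) :
    avgList p q (tail e (e y + 1)) (fun σ => u σ * grad y (increment p q e i f) σ) =
      fun _ => 0 := by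
  rcases lt_or_gt_of_ne (e.injective.ne hiy) with h | h
  · simp only [(indepOf_increment h f).grad_eq_zero, mul_zero, avgList_zero]
  · rw [increment_eq, grad_sub, grad_avgAt hiy.symm]
    exact avgList_mul_sub_avgAt hpq (mem_tail.2 h) hu _

/- Write `f` as the sum of its increments. An increment at a site before `y` does not depend on `y`;
one at a site after `y` outside `D` is averaged out, and `u` does not depend on that site. -/
lemma avgList_mul_grad_eq_sum_increment (hpq : p + q = 1) (e : ι ≃ Fin n)
    (f : (ι → Bool) → ℝ) (y : ι) {D : Finset ι} {u : (ι → Bool) → ℝ}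
    (hu : ∀ i ∉ D, IndepOf i u) :
    avgList p q (tail e (e y + 1)) (fun σ => u σ * grad y f σ) =
      avgList p q (tail e (e y + 1)) (fun σ =>
        u σ * grad y (fun τ => ∑ i ∈ insert y D, increment p q e i f τ) σ) := by
  have hgrad : ∀ σ, grad y f σ = grad y (fun τ => ∑ i ∈ insert y D, increment p q e i f τ) σ +
      ∑ i ∈ (insert y D)ᶜ, grad y (increment p q e i f) σ := by
    intro σ
    have hf : ∀ τ, f τ = expect p q f + ∑ i, increment p q e i f τ := fun τ => by
      rw [sum_increment hpq]; ring
    simp only [grad]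
    rw [hf (update σ y true), hf (update σ y false), ← Finset.sum_sub_distrib,
      Finset.sum_add_sum_compl, Finset.sum_sub_distrib]
    ring
  simp only [hgrad, mul_add, Finset.mul_sum]
  rw [avgList_add, avgList_sum]
  funext σ
  refine add_eq_left.2 (Finset.sum_eq_zero fun i hi => ?_)
  rw [Finset.mem_compl, Finset.mem_insert, not_or] at hi
  exact congrFun (avgList_mul_grad_increment hpq e hi.1 (hu i hi.2) f) σ

lemma expect_sq_avgList_mul_grad_le (hpq : p + q = 1) (hp : 0 ≤ p) (hq : 0 ≤ q)
    (e : ι ≃ Fin n) (f : (ι → Bool) → ℝ) {y : ι} {D : Finset ι} (hD : ∀ i ∈ D, e y < e i)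
    {u : (ι → Bool) → ℝ} (hu01 : ∀ σ, u σ ^ 2 = u σ) (hu : ∀ i ∉ D, IndepOf i u) :
    expect p q (fun σ =>
        p * q * avgList p q (tail e (e y + 1)) (fun τ => u τ * grad y f τ) σ ^ 2) ≤
      expect p q u * ∑ i ∈ insert y D, expect p q (fun σ => increment p q e i f σ ^ 2) := by
  set L := tail e (e y + 1)
  set Φ : (ι → Bool) → ℝ := fun σ => ∑ i ∈ insert y D, increment p q e i f σ
  have hCS : ∀ σ, avgList p q L (fun τ => u τ * grad y Φ τ) σ ^ 2 ≤
      expect p q u * avgList p q L (fun τ => grad y Φ τ ^ 2) σ := by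
    intro σ
    have hL : ∀ i ∉ L, IndepOf i u := fun i hi => hu i fun hiD => hi (mem_tail.2 (hD i hiD))
    have h := sq_avgList_mul_le hp hq L u (grad y Φ) σ
    rwa [show (fun τ => u τ ^ 2) = u from funext hu01, avgList_eq_expect hpq hL σ] at h
  have hu0 : 0 ≤ expect p q u := expect_nonneg hp hq fun σ => hu01 σ ▸ sq_nonneg (u σ)
  calc expect p q (fun σ => p * q * avgList p q L (fun τ => u τ * grad y f τ) σ ^ 2)
      = expect p q (fun σ => p * q * avgList p q L (fun τ => u τ * grad y Φ τ) σ ^ 2) := by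
        rw [avgList_mul_grad_eq_sum_increment hpq e f y hu]
    _ ≤ expect p q (fun σ =>
          p * q * (expect p q u * avgList p q L (fun τ => grad y Φ τ ^ 2) σ)) :=
        expect_mono hp hq fun σ => mul_le_mul_of_nonneg_left (hCS σ) (mul_nonneg hp hq)
    _ = expect p q u * expect p q (fun σ => p * q * grad y Φ σ ^ 2) := by
        rw [expect_const_mul, expect_const_mul, expect_avgList hpq, expect_const_mul]
        ring
    _ ≤ expect p q u * expect p q (fun σ => Φ σ ^ 2) :=
        mul_le_mul_of_nonneg_left (expect_mul_grad_sq_le hpq hp hq y Φ) hu0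
    _ = expect p q u * ∑ i ∈ insert y D, expect p q (fun σ => increment p q e i f σ ^ 2) := by
        rw [expect_sq_sum_increment hpq]

lemma expect_sq_increment_le (hpq : p + q = 1) (hp : 0 ≤ p) (hq : 0 ≤ q) (e : ι ≃ Fin n)
    (f : (ι → Bool) → ℝ) {y : ι} {D : Finset ι} (hD : ∀ i ∈ D, e y < e i)
    {S : Set (ι → Bool)} (hS : ∀ σ τ, (∀ i ∈ D, σ i = τ i) → (σ ∈ S ↔ τ ∈ S)) :
    expect p q (fun σ => increment p q e y f σ ^ 2) ≤
      2 * expect p q (fun σ => (if σ ∈ S then 1 else 0) *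
          (avgAt p q y (fun τ => f τ ^ 2) σ - avgAt p q y f σ ^ 2)) +
        2 * expect p q (fun σ => if σ ∈ S then 0 else 1) *
          ∑ i ∈ insert y D, expect p q (fun σ => increment p q e i f σ ^ 2) := by
  set c : (ι → Bool) → ℝ := fun σ => if σ ∈ S then 1 else 0
  set u : (ι → Bool) → ℝ := fun σ => if σ ∈ S then 0 else 1
  set L := tail e (e y + 1)
  set a := avgList p q L (fun τ => c τ * grad y f τ)
  set b := avgList p q L (fun τ => u τ * grad y f τ)
  have hab : avgList p q L (grad y f) = fun σ => a σ + b σ := by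
    rw [← avgList_add]
    congr
    funext τ
    simp only [c, u]
    split_ifs <;> ring
  have hvar : (fun σ => c σ * (avgAt p q y (fun τ => f τ ^ 2) σ - avgAt p q y f σ ^ 2)) =
      fun σ => c σ * (p * q * grad y f σ ^ 2) :=
    funext fun σ => by rw [avgAt_sq_sub_sq hpq]
  rw [expect_sq_increment hpq, hab, hvar, mul_assoc 2 (expect p q u)]
  calc expect p q (fun σ => p * q * (a σ + b σ) ^ 2)
      ≤ expect p q (fun σ => 2 * (p * q * a σ ^ 2) + 2 * (p * q * b σ ^ 2)) :=
        expect_mono hp hq fun σ => by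
          nlinarith [mul_nonneg (mul_nonneg hp hq) (sq_nonneg (a σ - b σ))]
    _ = 2 * expect p q (fun σ => p * q * a σ ^ 2) + 2 * expect p q (fun σ => p * q * b σ ^ 2) := by
        rw [expect_add, expect_const_mul 2, expect_const_mul 2]
    _ ≤ _ := by
        gcongr
        · exact expect_sq_avgList_mul_le hpq hp hq L
            (fun σ => by simp only [c]; split_ifs <;> norm_num) _
        · exact expect_sq_avgList_mul_grad_le hpq hp hq e f hD
            (fun σ => by simp only [u]; split_ifs <;> norm_num)
            (fun i hi => indepOf_ite_of_dependsOn hS 0 1 hi)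

end VertexBound

lemma sum_sum_insert_le_mul_sum {α : Type*} [Fintype α] [DecidableEq α] (s : α → Finset α)
    {g : α → ℝ} (hg : ∀ i, 0 ≤ g i) {κ : ℝ}
    (hκ : ∀ i, ((Finset.univ.filter fun y => i ∈ s y ∨ i = y).card : ℝ) ≤ κ) :
    ∑ x, ∑ i ∈ insert x (s x), g i ≤ κ * ∑ i, g i :=
  calc ∑ x, ∑ i ∈ insert x (s x), g i
      = ∑ i, ∑ _y ∈ Finset.univ.filter fun y => i ∈ s y ∨ i = y, g i :=
        Finset.sum_comm' fun x i => by simp [or_comm, eq_comm]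
    _ = ∑ i, ((Finset.univ.filter fun y => i ∈ s y ∨ i = y).card : ℝ) * g i := by
        simp only [Finset.sum_const, nsmul_eq_mul]
    _ ≤ ∑ i, κ * g i := Finset.sum_le_sum fun i _ => mul_le_mul_of_nonneg_right (hκ i) (hg i)
    _ = κ * ∑ i, g i := (Finset.mul_sum _ _ _).symm

lemma sum_le_four_mul_sum_of_le {α : Type*} [Fintype α] [DecidableEq α] (s : α → Finset α)
    {v d : α → ℝ} (hv : ∀ x, 0 ≤ v x) {ε κ : ℝ} (hε : 0 ≤ ε)
    (hκ : ∀ i, ((Finset.univ.filter fun y => i ∈ s y ∨ i = y).card : ℝ) ≤ κ)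
    (hεκ : ε * κ < 1 / 4) (hvd : ∀ x, v x ≤ 2 * d x + 2 * ε * ∑ i ∈ insert x (s x), v i) :
    ∑ x, v x ≤ 4 * ∑ x, d x := by
  have hrec : ∑ x, v x ≤ 2 * ∑ x, d x + 2 * ε * (κ * ∑ x, v x) :=
    calc ∑ x, v x ≤ ∑ x, (2 * d x + 2 * ε * ∑ i ∈ insert x (s x), v i) :=
          Finset.sum_le_sum fun x _ => hvd x
      _ = 2 * ∑ x, d x + 2 * ε * ∑ x, ∑ i ∈ insert x (s x), v i := by
          rw [Finset.sum_add_distrib, Finset.mul_sum, Finset.mul_sum]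
      _ ≤ 2 * ∑ x, d x + 2 * ε * (κ * ∑ x, v x) := by
          gcongr
          exact sum_sum_insert_le_mul_sum s hv hκ
  have hv0 : 0 ≤ ∑ x, v x := Finset.sum_nonneg fun x _ => hv x
  nlinarith [mul_nonneg (sub_nonneg.2 hεκ.le) hv0]

theorem statement8_general
    (p q : ℝ) (hp : p ∈ Set.Icc (0:ℝ) 1) (hq : q ∈ Set.Icc (0:ℝ) 1) (hpq : p + q = 1)
    (A : Finset V)
    (ord : {x : V // x ∈ A} ≃ Fin A.card)
    (E : {x : V // x ∈ A} → Set (Conf A))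
    (Δ : {x : V // x ∈ A} → Finset {x : V // x ∈ A})
    (hΔsub : ∀ x, ∀ y ∈ Δ x, ord x < ord y)
    (hdep : ∀ x (σ τ : Conf A), (∀ y ∈ Δ x, σ y = τ y) → (σ ∈ E x ↔ τ ∈ E x))
    (hmain : (⨆ x, mean p q A fun σ => if σ ∈ E x then 0 else 1) *
        (⨆ x : {x : V // x ∈ A},
          ((Finset.univ.filter fun y => x ∈ Δ y ∨ x = y).card : ℝ)) < 1/4) :
    ∀ f : Conf A → ℝ,
      variance p q A f ≤
        4 * ∑ x, mean p q A fun σ => (if σ ∈ E x then (1:ℝ) else 0) * varAt p q A x f σ := by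
  intro f
  set ε := ⨆ x, mean p q A fun σ => if σ ∈ E x then (0:ℝ) else 1
  set κ := ⨆ x : {x : V // x ∈ A}, ((Finset.univ.filter fun y => x ∈ Δ y ∨ x = y).card : ℝ)
  have hε : ∀ x, (mean p q A fun σ => if σ ∈ E x then (0:ℝ) else 1) ≤ ε :=
    le_ciSup (f := fun x => mean p q A fun σ => if σ ∈ E x then (0:ℝ) else 1)
      (Set.finite_range _).bddAbove
  have hκ : ∀ x, ((Finset.univ.filter fun y => x ∈ Δ y ∨ x = y).card : ℝ) ≤ κ :=
    le_ciSup (f := fun x => ((Finset.univ.filter fun y => x ∈ Δ y ∨ x = y).card : ℝ))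
      (Set.finite_range _).bddAbove
  have hε0 : 0 ≤ ε := Real.iSup_nonneg fun _ =>
    expect_nonneg hp.1 hq.1 fun σ => by split_ifs <;> norm_num
  have hv0 : ∀ x, 0 ≤ expect p q (fun σ => increment p q ord x f σ ^ 2) :=
    fun x => expect_nonneg hp.1 hq.1 fun σ => sq_nonneg _
  rw [show variance p q A f = _ from variance_eq_sum_increment hpq ord f]
  refine sum_le_four_mul_sum_of_le Δ hv0 hε0 hκ hmain fun x => ?_
  refine (expect_sq_increment_le hpq hp.1 hq.1 ord f (hΔsub x) (hdep x)).trans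
    (add_le_add le_rfl ?_)
  exact mul_le_mul_of_nonneg_right (mul_le_mul_of_nonneg_left (hε x) two_pos.le)
    (Finset.sum_nonneg fun i _ => hv0 i)

/-- **Lemma 6.5 (auxiliary constrained Poincaré inequality).** Let `A` be finite connected,
`z ∈ ∂A`, and order the vertices of `A` so that vertices farther from `z` come first. For each
`x ∈ A` let `E_x` be an event depending only on the coordinates in `Δ_x ⊆ Ã_x = {y > x}` and set
`c̃_x = 1_{E_x}`. If `(sup_x μ_A(1-c̃_x))·(sup_x |{y : x ∈ Δ_y ∪ {y}}|) < 1/4`, then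
`Var_{μ_A}(f) ≤ 4 Σ_{x∈A} μ_A(c̃_x Var_x(f))` for every `f`. -/
theorem statement8 (G : SimpleGraph V)
    (hloc : ∀ v : V, (G.neighborSet v).Finite)
    (p q : ℝ) (hp : p ∈ Set.Icc (0:ℝ) 1) (hq : q ∈ Set.Icc (0:ℝ) 1) (hpq : p + q = 1)
    (A : Finset V) (hA : FinConnected G A) (z : V) (hz : z ∈ outerBoundary G A)
    (ord : {x : V // x ∈ A} ≃ Fin A.card)
    (hord : ∀ x y : {x : V // x ∈ A}, G.dist ↑y z < G.dist ↑x z → ord x < ord y)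
    (E : {x : V // x ∈ A} → Set (Conf A))
    (Δ : {x : V // x ∈ A} → Finset {x : V // x ∈ A})
    (hΔsub : ∀ x, ∀ y ∈ Δ x, ord x < ord y)
    (hdep : ∀ x (σ τ : Conf A), (∀ y ∈ Δ x, σ y = τ y) → (σ ∈ E x ↔ τ ∈ E x))
    (hmain : (⨆ x, mean p q A fun σ => if σ ∈ E x then 0 else 1) *
        (⨆ x : {x : V // x ∈ A},
          ((Finset.univ.filter fun y => x ∈ Δ y ∨ x = y).card : ℝ)) < 1/4) :
    ∀ f : Conf A → ℝ,
      variance p q A f ≤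
        4 * ∑ x, mean p q A fun σ => (if σ ∈ E x then (1:ℝ) else 0) * varAt p q A x f σ :=
  statement8_general p q hp hq hpq A ord E Δ hΔsub hdep hmain

end FA1f
end
end

section
/- Let Λ=A∪B with A,B⊆V finite, nonempty and disjoint, and let p,q∈[0,1] with p+q=1. Define c_A=1_{Ω̂_A} and c_B=1_{Ω̂_B} (the indicator functions, as functions on Ω_Λ, that A, respectively B, contains at least one empty site). Assume max(1−μ_Λ(c_A), 1−μ_Λ(c_B)) < 1/16, i.e. max(p^{|A|},p^{|B|})<1/16. Then for every f:Ω̂_Λ→ℝ with μ̂_Λ(f)=0, Var_{μ̂_Λ}(f) ≤ 24·μ̂_Λ[ c_B·Var_{μ_A}(f̃) + c_A·Var_{μ_B}(f̃) ], where f̃:Ω_Λ→ℝ is the extension of f defined by f̃(σ)=f(σ) for σ∈Ω̂_Λ and f̃(σ)=0 otherwise, and Var_{μ_A}(f̃) (respectively Var_{μ_B}(f̃)) denotes the function of the coordinates in B (respectively A) obtained by taking the variance of f̃ over the coordinates in A (respectively B) with respect to μ_A (respectively μ_B). -/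
open scoped Classical

noncomputable section

/-!
Split `σ ∈ Ω_Λ` as `(α, β) ∈ Ω_A × Ω_B` and put `G(α, β) = f̃(σ)`. Outside `Ω̂_Λ` there is only the
full configuration `(1_A, 1_B)`, where `G` vanishes, so every `μ̂_Λ`-average in the claim is the
`μ_Λ`-average of the same integrand divided by `μ_Λ(Ω̂_Λ)`, and `μ_Λ(G) = 0`.

Tensorisation of the variance gives `μ_Λ(G²) ≤ μ_Λ(Var_A G) + μ_Λ(Var_B G)`. This differs from the
right-hand side only by the terms `p^{|B|} Var_A G(·, 1_B)` and `p^{|A|} Var_B G(1_A, ·)`. As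
`G(1_A, 1_B) = 0`, the first is at most `p^{|B|} μ_A(c_A G(·, 1_B)²)`, and splitting
`G(α, 1_B)` into its deviation from `μ_B G(α, ·)` (whose `p^{|B|}`-weighted square is at most
`Var_B G(α, ·)`) and that mean bounds it by `2 μ_Λ(c_A Var_B G) + 2 p^{|B|} μ_Λ(G²)`. Hence
`(1 - 2(p^{|A|} + p^{|B|})) μ_Λ(G²) ≤ 3 μ_Λ(c_B Var_A G + c_A Var_B G)`, and the prefactor exceeds
`3/4` when `p^{|A|}, p^{|B|} < 1/16`.
-/

namespace FA1f

section WeightedAverage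

variable {ι κ : Type*} [Fintype ι] [Fintype κ]

def wavg (w h : ι → ℝ) : ℝ := ∑ i, w i * h i

def wvar (w h : ι → ℝ) : ℝ := wavg w (fun i => h i ^ 2) - wavg w h ^ 2

lemma wavg_add (w h h' : ι → ℝ) : wavg w (fun i => h i + h' i) = wavg w h + wavg w h' := by
  simp only [wavg, mul_add, Finset.sum_add_distrib]

lemma wavg_sub (w h h' : ι → ℝ) : wavg w (fun i => h i - h' i) = wavg w h - wavg w h' := by
  simp only [wavg, mul_sub, Finset.sum_sub_distrib]

lemma wavg_const_mul (w h : ι → ℝ) (c : ℝ) : wavg w (fun i => c * h i) = c * wavg w h := by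
  simp only [wavg, Finset.mul_sum]
  exact Finset.sum_congr rfl fun _ _ => by ring

lemma wavg_const {w : ι → ℝ} (hw1 : ∑ i, w i = 1) (c : ℝ) : wavg w (fun _ => c) = c := by
  rw [wavg, ← Finset.sum_mul, hw1, one_mul]

lemma wavg_le_wavg {w h h' : ι → ℝ} (hw : ∀ i, 0 ≤ w i) (hh : ∀ i, h i ≤ h' i) :
    wavg w h ≤ wavg w h' :=
  Finset.sum_le_sum fun i _ => mul_le_mul_of_nonneg_left (hh i) (hw i)

lemma wavg_nonneg {w h : ι → ℝ} (hw : ∀ i, 0 ≤ w i) (hh : ∀ i, 0 ≤ h i) : 0 ≤ wavg w h :=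
  Finset.sum_nonneg fun i _ => mul_nonneg (hw i) (hh i)

lemma wavg_comm (u : ι → ℝ) (v : κ → ℝ) (F : ι → κ → ℝ) :
    wavg u (fun a => wavg v (F a)) = wavg v (fun b => wavg u (F · b)) := by
  simp only [wavg, Finset.mul_sum]
  rw [Finset.sum_comm]
  exact Finset.sum_congr rfl fun _ _ => Finset.sum_congr rfl fun _ _ => by ring

lemma wavg_eq_wavg_ite_add [DecidableEq ι] (w h : ι → ℝ) (i₀ : ι) :
    wavg w h = wavg w (fun i => (if i = i₀ then 0 else 1) * h i) + w i₀ * h i₀ := by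
  rw [wavg, wavg, Fintype.sum_eq_add_sum_compl i₀, Fintype.sum_eq_add_sum_compl i₀, if_pos rfl,
    zero_mul, mul_zero, zero_add, add_comm]
  congr 1
  exact Finset.sum_congr rfl fun i hi => by
    rw [if_neg (Finset.mem_compl.mp hi ∘ Finset.mem_singleton.mpr), one_mul]

lemma sq_wavg_le {w : ι → ℝ} (hw : ∀ i, 0 ≤ w i) (hw1 : ∑ i, w i = 1) (h : ι → ℝ) :
    wavg w h ^ 2 ≤ wavg w (fun i => h i ^ 2) :=
  (even_two.convexOn_pow (𝕜 := ℝ)).map_sum_le (fun i _ => hw i) hw1 (fun _ _ => Set.mem_univ _)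

lemma wvar_le_wavg_sq (w h : ι → ℝ) : wvar w h ≤ wavg w (fun i => h i ^ 2) :=
  sub_le_self _ (sq_nonneg _)

lemma wvar_eq_wavg_sq_sub (w : ι → ℝ) (hw1 : ∑ i, w i = 1) (h : ι → ℝ) :
    wvar w h = wavg w (fun i => (h i - wavg w h) ^ 2) := by
  have hexp : ∀ i, (h i - wavg w h) ^ 2 = h i ^ 2 + (-2 * wavg w h) * h i + wavg w h ^ 2 :=
    fun i => by ring
  simp only [hexp, wavg_add, wavg_const_mul, wavg_const hw1, wvar]
  ring

lemma mul_sq_sub_wavg_le_wvar {w : ι → ℝ} (hw : ∀ i, 0 ≤ w i) (hw1 : ∑ i, w i = 1)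
    (h : ι → ℝ) (i₀ : ι) : w i₀ * (h i₀ - wavg w h) ^ 2 ≤ wvar w h := by
  rw [wvar_eq_wavg_sq_sub w hw1]
  exact Finset.single_le_sum (f := fun i => w i * (h i - wavg w h) ^ 2)
    (fun i _ => mul_nonneg (hw i) (sq_nonneg _)) (Finset.mem_univ i₀)

end WeightedAverage

section TwoBlocks

variable {ι κ : Type*} [Fintype ι] [Fintype κ] {u : ι → ℝ} {v : κ → ℝ}

theorem wavg_wavg_sq_le_of_wavg_wavg_eq_zero (hu : ∀ a, 0 ≤ u a) (hv : ∀ b, 0 ≤ v b)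
    (hu1 : ∑ a, u a = 1) (hv1 : ∑ b, v b = 1) (G : ι → κ → ℝ)
    (hG : wavg u (fun a => wavg v (G a)) = 0) :
    wavg u (fun a => wavg v (fun b => G a b ^ 2)) ≤
      wavg v (fun b => wvar u (G · b)) + wavg u (fun a => wvar v (G a)) := by
  set c : κ → ℝ := fun b => wavg u (G · b)
  have hc : wavg v c = 0 := by rw [← wavg_comm, hG]
  -- centring each column does not change the row means, since the column means average to `0`
  have hrow : ∀ a, wavg v (G a) ^ 2 ≤ wavg v (fun b => (G a b - c b) ^ 2) := fun a => by
    simpa only [wavg_sub, hc, sub_zero] using sq_wavg_le hv hv1 (fun b => G a b - c b)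
  calc wavg u (fun a => wavg v (fun b => G a b ^ 2))
      = wavg u (fun a => wvar v (G a)) + wavg u (fun a => wavg v (G a) ^ 2) := by
        rw [← wavg_add]; simp only [wvar, sub_add_cancel]
    _ ≤ wavg u (fun a => wvar v (G a)) + wavg u (fun a => wavg v (fun b => (G a b - c b) ^ 2)) :=
        add_le_add le_rfl (wavg_le_wavg hu hrow)
    _ = wavg v (fun b => wvar u (G · b)) + wavg u (fun a => wvar v (G a)) := by
        rw [wavg_comm, add_comm]
        simp only [c, wvar_eq_wavg_sq_sub u hu1]

theorem mul_wvar_le_of_eq_zero [DecidableEq ι] (hu : ∀ a, 0 ≤ u a) (hv : ∀ b, 0 ≤ v b)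
    (hv1 : ∑ b, v b = 1) (G : ι → κ → ℝ) {a₀ : ι} {b₀ : κ} (hG₀ : G a₀ b₀ = 0) :
    v b₀ * wvar u (G · b₀) ≤
      2 * wavg u (fun a => (if a = a₀ then 0 else 1) * wvar v (G a)) +
        2 * v b₀ * wavg u (fun a => wavg v (fun b => G a b ^ 2)) := by
  have hpt : ∀ a, v b₀ * ((if a = a₀ then 0 else 1) * G a b₀ ^ 2) ≤
      2 * ((if a = a₀ then 0 else 1) * wvar v (G a)) +
        2 * v b₀ * wavg v (fun b => G a b ^ 2) := fun a => by
    have hsq := wavg_nonneg hv fun b => sq_nonneg (G a b)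
    split_ifs
    · nlinarith [hv b₀]
    · have h₁ := mul_sq_sub_wavg_le_wvar hv hv1 (G a) b₀
      have h₂ := sq_wavg_le hv hv1 (G a)
      nlinarith [hv b₀, mul_nonneg (hv b₀) (sq_nonneg (G a b₀ - 2 * wavg v (G a)))]
  have hcol : wavg u (fun a => G a b₀ ^ 2) =
      wavg u (fun a => (if a = a₀ then 0 else 1) * G a b₀ ^ 2) := by
    congr 1; funext a; split_ifs with h <;> simp [h, hG₀]
  calc v b₀ * wvar u (G · b₀)
      ≤ v b₀ * wavg u (fun a => G a b₀ ^ 2) :=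
        mul_le_mul_of_nonneg_left (wvar_le_wavg_sq _ _) (hv b₀)
    _ ≤ _ := by
        rw [hcol, ← wavg_const_mul, ← wavg_const_mul, ← wavg_const_mul, ← wavg_add]
        exact wavg_le_wavg hu hpt

theorem one_sub_two_mul_wavg_wavg_sq_le [DecidableEq ι] [DecidableEq κ]
    (hu : ∀ a, 0 ≤ u a) (hv : ∀ b, 0 ≤ v b) (hu1 : ∑ a, u a = 1) (hv1 : ∑ b, v b = 1)
    (G : ι → κ → ℝ) {a₀ : ι} {b₀ : κ} (hG₀ : G a₀ b₀ = 0)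
    (hG : wavg u (fun a => wavg v (G a)) = 0) :
    (1 - 2 * (u a₀ + v b₀)) * wavg u (fun a => wavg v (fun b => G a b ^ 2)) ≤
      3 * (wavg v (fun b => (if b = b₀ then 0 else 1) * wvar u (G · b)) +
        wavg u (fun a => (if a = a₀ then 0 else 1) * wvar v (G a))) := by
  have hES := wavg_wavg_sq_le_of_wavg_wavg_eq_zero hu hv hu1 hv1 G hG
  have hB := mul_wvar_le_of_eq_zero hu hv hv1 G hG₀
  have hA := mul_wvar_le_of_eq_zero hv hu hu1 (fun b a => G a b) hG₀
  rw [← wavg_comm] at hA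
  rw [wavg_eq_wavg_ite_add v (fun b => wvar u (G · b)) b₀,
    wavg_eq_wavg_ite_add u (fun a => wvar v (G a)) a₀] at hES
  linarith

end TwoBlocks

section Configurations

variable {V : Type*} {p q : ℝ}

lemma wt_nonneg (hp : 0 ≤ p) (hq : 0 ≤ q) (S : Finset V) (τ : Conf S) : 0 ≤ wt p q S τ :=
  Finset.prod_nonneg fun x _ => by unfold bw; split <;> assumption

lemma wt_true (S : Finset V) : wt p q S (fun _ => true) = p ^ S.card := by
  simp [wt, bw]

lemma exists_eq_false_iff_ne_true {S : Finset V} (τ : Conf S) :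
    (∃ x, τ x = false) ↔ τ ≠ fun _ => true := by
  simp [funext_iff]

variable [DecidableEq V] {A B : Finset V}

lemma sum_wt (hpq : p + q = 1) (S : Finset V) : ∑ τ : Conf S, wt p q S τ = 1 := by
  rw [show ∑ τ : Conf S, wt p q S τ = ∏ _x : {x // x ∈ S}, ∑ b, bw p q b from
    (Fintype.prod_sum _).symm]
  simp [bw, hpq]

lemma mean_nonneg (hp : 0 ≤ p) (hq : 0 ≤ q) {Λ : Finset V} {f : Conf Λ → ℝ}
    (hf : ∀ σ, 0 ≤ f σ) : 0 ≤ mean p q Λ f :=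
  wavg_nonneg (wt_nonneg hp hq Λ) hf

def glue (α : Conf A) (β : Conf B) : Conf (A ∪ B) := fun x =>
  if h : ↑x ∈ A then α ⟨x, h⟩ else β ⟨x, (Finset.mem_union.mp x.2).resolve_left h⟩

@[simp]
lemma glue_left (α : Conf A) (β : Conf B) (a : {x : V // x ∈ A}) :
    glue α β ⟨a, Finset.mem_union_left B a.2⟩ = α a := by
  simp [glue]

@[simp]
lemma glue_right (hAB : Disjoint A B) (α : Conf A) (β : Conf B) (b : {x : V // x ∈ B}) :
    glue α β ⟨b, Finset.mem_union_right A b.2⟩ = β b := by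
  simp [glue, Finset.disjoint_right.mp hAB b.2]

lemma glue_true : glue (fun _ : {x // x ∈ A} => true) (fun _ : {x // x ∈ B} => true) =
    fun _ => true := by
  funext x; simp [glue]

def glueEquiv (hAB : Disjoint A B) : Conf A × Conf B ≃ Conf (A ∪ B) where
  toFun z := glue z.1 z.2
  invFun σ := (fun a => σ ⟨a, Finset.mem_union_left B a.2⟩,
    fun b => σ ⟨b, Finset.mem_union_right A b.2⟩)
  left_inv z := by ext x <;> simp [hAB]
  right_inv σ := by funext x; by_cases h : ↑x ∈ A <;> simp [glue, h]

lemma wt_glue (hAB : Disjoint A B) (α : Conf A) (β : Conf B) :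
    wt p q (A ∪ B) (glue α β) = wt p q A α * wt p q B β := by
  rw [wt, ← (Equiv.Finset.union A B hAB).prod_comp, Fintype.prod_sum_type]
  simp [wt, hAB]

lemma mean_union (hAB : Disjoint A B) (F : Conf (A ∪ B) → ℝ) :
    mean p q (A ∪ B) F = wavg (wt p q A) (fun α => wavg (wt p q B) (fun β => F (glue α β))) := by
  rw [mean, ← (glueEquiv hAB).sum_comp, Fintype.sum_prod_type]
  simp only [wavg, Finset.mul_sum]
  exact Finset.sum_congr rfl fun α _ => Finset.sum_congr rfl fun β _ => by
    simp only [glueEquiv, Equiv.coe_fn_mk, wt_glue hAB]; ring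

lemma exists_mem_left_glue_eq_false (α : Conf A) (β : Conf B) :
    (∃ x : {x : V // x ∈ A ∪ B}, ↑x ∈ A ∧ glue α β x = false) ↔ α ≠ fun _ => true := by
  rw [← exists_eq_false_iff_ne_true]
  constructor
  · rintro ⟨x, hxA, hx⟩
    exact ⟨⟨x, hxA⟩, by simpa [glue, hxA] using hx⟩
  · rintro ⟨a, ha⟩
    exact ⟨⟨a, Finset.mem_union_left B a.2⟩, a.2, by simpa using ha⟩

lemma exists_mem_right_glue_eq_false (hAB : Disjoint A B) (α : Conf A) (β : Conf B) :
    (∃ x : {x : V // x ∈ A ∪ B}, ↑x ∈ B ∧ glue α β x = false) ↔ β ≠ fun _ => true := by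
  rw [← exists_eq_false_iff_ne_true]
  constructor
  · rintro ⟨x, hxB, hx⟩
    exact ⟨⟨x, hxB⟩, by simpa [glue, Finset.disjoint_right.mp hAB hxB] using hx⟩
  · rintro ⟨b, hb⟩
    exact ⟨⟨b, Finset.mem_union_right A b.2⟩, b.2, by simpa [hAB] using hb⟩

lemma avgOver_left_glue (g : Conf (A ∪ B) → ℝ) (α : Conf A) (β : Conf B) :
    avgOver p q (A ∪ B) A g (glue α β) = wavg (wt p q A) (fun τ => g (glue τ β)) := by
  refine Finset.sum_congr rfl fun τ _ => congrArg (_ * ·) (congrArg g (funext fun x => ?_))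
  by_cases h : ↑x ∈ A <;> simp [glue, h]

lemma avgOver_right_glue (hAB : Disjoint A B) (g : Conf (A ∪ B) → ℝ) (α : Conf A)
    (β : Conf B) :
    avgOver p q (A ∪ B) B g (glue α β) = wavg (wt p q B) (fun ρ => g (glue α ρ)) := by
  refine Finset.sum_congr rfl fun ρ _ => congrArg (_ * ·) (congrArg g (funext fun x => ?_))
  by_cases h : ↑x ∈ A
  · simp [glue, h, Finset.disjoint_left.mp hAB h]
  · simp [glue, h, (Finset.mem_union.mp x.2).resolve_left h]

theorem one_sub_two_mul_mean_sq_le (hp : 0 ≤ p) (hq : 0 ≤ q) (hpq : p + q = 1)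
    (hAB : Disjoint A B) (G : Conf (A ∪ B) → ℝ) (hG₀ : G (fun _ => true) = 0)
    (hG : mean p q (A ∪ B) G = 0) :
    (1 - 2 * (p ^ A.card + p ^ B.card)) * mean p q (A ∪ B) (fun σ => G σ ^ 2) ≤
      3 * mean p q (A ∪ B) (fun σ =>
        (if ∃ x : {x : V // x ∈ A ∪ B}, ↑x ∈ B ∧ σ x = false then (1:ℝ) else 0) *
          varOver p q (A ∪ B) A G σ +
        (if ∃ x : {x : V // x ∈ A ∪ B}, ↑x ∈ A ∧ σ x = false then (1:ℝ) else 0) *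
          varOver p q (A ∪ B) B G σ) := by
  have hu1 := sum_wt hpq A
  have hv1 := sum_wt hpq B
  have key := one_sub_two_mul_wavg_wavg_sq_le (wt_nonneg hp hq A) (wt_nonneg hp hq B) hu1 hv1
    (fun α β => G (glue α β)) (a₀ := fun _ => true) (b₀ := fun _ => true)
    (by rw [glue_true, hG₀]) (by rwa [mean_union hAB] at hG)
  rw [wt_true, wt_true] at key
  convert key using 2
  · exact mean_union hAB _
  · simp only [mean_union hAB, exists_mem_left_glue_eq_false, exists_mem_right_glue_eq_false hAB,
      ite_not, varOver, avgOver_left_glue, avgOver_right_glue hAB, wvar, wavg_add,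
      wavg_const hu1, wavg_const hv1]

end Configurations

variable {V : Type*} [DecidableEq V]

theorem statement9_general
    (p q : ℝ) (hp : p ∈ Set.Icc (0:ℝ) 1) (hq : q ∈ Set.Icc (0:ℝ) 1) (hpq : p + q = 1)
    (A B : Finset V) (hAB : Disjoint A B)
    (hmax : max (p ^ A.card) (p ^ B.card) < 1/16) :
    ∀ f : Conf (A ∪ B) → ℝ, hatMean p q (A ∪ B) f = 0 →
      hatVar p q (A ∪ B) f ≤
        24 * hatMean p q (A ∪ B) (fun σ =>
          (if ∃ x : {x : V // x ∈ A ∪ B}, ↑x ∈ B ∧ σ x = false then (1:ℝ) else 0) *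
            varOver p q (A ∪ B) A (fun ρ => if hasZero (A ∪ B) ρ then f ρ else 0) σ +
          (if ∃ x : {x : V // x ∈ A ∪ B}, ↑x ∈ A ∧ σ x = false then (1:ℝ) else 0) *
            varOver p q (A ∪ B) B (fun ρ => if hasZero (A ∪ B) ρ then f ρ else 0) σ) := by
  intro f hf
  set g : Conf (A ∪ B) → ℝ := fun ρ => if hasZero (A ∪ B) ρ then f ρ else 0
  set R : Conf (A ∪ B) → ℝ := fun σ =>
    (if ∃ x : {x : V // x ∈ A ∪ B}, ↑x ∈ B ∧ σ x = false then (1:ℝ) else 0) *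
      varOver p q (A ∪ B) A g σ +
    (if ∃ x : {x : V // x ∈ A ∪ B}, ↑x ∈ A ∧ σ x = false then (1:ℝ) else 0) *
      varOver p q (A ∪ B) B g σ
  set Z := mean p q (A ∪ B) (fun σ => if hasZero (A ∪ B) σ then 1 else 0)
  have hvar : hatVar p q (A ∪ B) f = mean p q (A ∪ B) (fun σ => g σ ^ 2) / Z := by
    rw [hatVar, hf, zero_pow two_ne_zero, sub_zero, hatMean]
    congr 2
    funext σ
    simp [g, ite_pow]
  -- `R` vanishes at the full configuration, the only one outside `Ω̂_Λ`
  have hR : hatMean p q (A ∪ B) R = mean p q (A ∪ B) R / Z := by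
    rw [hatMean]
    congr 2
    funext σ
    by_cases hσ : hasZero (A ∪ B) σ
    · rw [if_pos hσ]
    · simp_all [hasZero, R]
  rw [hvar, hR]
  rcases eq_or_ne Z 0 with hZ | hZ
  · simp [hZ]
  have hg : mean p q (A ∪ B) g = 0 := (div_eq_zero_iff.mp hf).resolve_right hZ
  have hg₀ : g (fun _ => true) = 0 := if_neg (by simp [hasZero])
  have key := one_sub_two_mul_mean_sq_le hp.1 hq.1 hpq hAB g hg₀ hg
  have hsq : 0 ≤ mean p q (A ∪ B) (fun σ => g σ ^ 2) := mean_nonneg hp.1 hq.1 fun σ => sq_nonneg _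
  have hZ₀ : 0 ≤ Z := mean_nonneg hp.1 hq.1 fun σ => by split_ifs <;> norm_num
  obtain ⟨hpA, hpB⟩ := max_lt_iff.mp hmax
  rw [mul_div_assoc']
  gcongr
  nlinarith [mul_nonneg (by linarith : (0:ℝ) ≤ 1 / 8 - (p ^ A.card + p ^ B.card)) hsq]

/-- **Lemma 6.6.** Let `Λ = A ∪ B` with `A, B` disjoint, finite and nonempty, and suppose
`max(p^{|A|}, p^{|B|}) < 1/16` (i.e. `max(1-μ(c_A), 1-μ(c_B)) < 1/16`). Then for every
`f : Ω̂_Λ → ℝ` with `μ̂_Λ(f) = 0`,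
`Var_{μ̂_Λ}(f) ≤ 24 μ̂_Λ[c_B Var_{μ_A}(f̃) + c_A Var_{μ_B}(f̃)]`, where `f̃` is the extension of
`f` by `0` outside `Ω̂_Λ`. -/
theorem statement9
    (p q : ℝ) (hp : p ∈ Set.Icc (0:ℝ) 1) (hq : q ∈ Set.Icc (0:ℝ) 1) (hpq : p + q = 1)
    (A B : Finset V) (hA : A.Nonempty) (hB : B.Nonempty) (hAB : Disjoint A B)
    (hmax : max (p ^ A.card) (p ^ B.card) < 1/16) :
    ∀ f : Conf (A ∪ B) → ℝ, hatMean p q (A ∪ B) f = 0 →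
      hatVar p q (A ∪ B) f ≤
        24 * hatMean p q (A ∪ B) (fun σ =>
          (if ∃ x : {x : V // x ∈ A ∪ B}, ↑x ∈ B ∧ σ x = false then (1:ℝ) else 0) *
            varOver p q (A ∪ B) A (fun ρ => if hasZero (A ∪ B) ρ then f ρ else 0) σ +
          (if ∃ x : {x : V // x ∈ A ∪ B}, ↑x ∈ A ∧ σ x = false then (1:ℝ) else 0) *
            varOver p q (A ∪ B) B (fun ρ => if hasZero (A ∪ B) ρ then f ρ else 0) σ) :=
  statement9_general p q hp hq hpq A B hAB hmax

end FA1f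
end
end
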